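/- arXiv:1709.00474 — 5 statements merged into one kernel-verified Lean document; each statement's English description precedes it below -/
import Mathlib

section
/- Let T be a threshold graph that is not complete, with vertex connectivity κ and largest clique size d. Then b_i − 1 = |C_i(T)| for every i with κ+1 ≤ i ≤ d−1, and b_d = |C_d(T)|, where C_i(T) denotes the set of maximal cliques of T with exactly i vertices. -/
open Finset

/-- `G` is chordal: every cycle of length at least 4 has a chord, i.e. an edge
joining two non-consecutive vertices of the cycle. -/
def IsChordal {V : Type*} (G : SimpleGraph V) : Prop :=
  ∀ (n : ℕ), 4 ≤ n → ∀ f : ZMod n → V, Function.Injective f →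
    (∀ i : ZMod n, G.Adj (f i) (f (i + 1))) →
    ∃ i j : ZMod n, i ≠ j ∧ i + 1 ≠ j ∧ j + 1 ≠ i ∧ G.Adj (f i) (f j)

/-- The number of cliques of `G` with exactly `i` vertices. -/
noncomputable def cliqueCount {V : Type*} [Fintype V] (G : SimpleGraph V) (i : ℕ) : ℕ :=
  {s : Finset V | G.IsNClique i s}.ncard

/-- `W(G - Y)`: the number of connected components of the subgraph of `G` induced on the
complement of `Y`. -/
noncomputable def numComponents {V : Type*} [Fintype V] [DecidableEq V] (G : SimpleGraph V)
    (Y : Finset V) : ℕ :=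
  Nat.card (G.induce (↑(Yᶜ) : Set V)).ConnectedComponent

/-- A vertex-cut of `G`: a set of vertices whose removal disconnects `G`. -/
def IsVertexCut {V : Type*} [Fintype V] [DecidableEq V] (G : SimpleGraph V) (Y : Finset V) :
    Prop :=
  ¬ (G.induce (↑(Yᶜ) : Set V)).Connected

/-- The vertex connectivity `κ(G)`: the minimum cardinality of a vertex-cut. -/
noncomputable def vertexConnectivity {V : Type*} [Fintype V] [DecidableEq V]
    (G : SimpleGraph V) : ℕ :=
  sInf {k | ∃ Y : Finset V, IsVertexCut G Y ∧ Y.card = k}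

/-- `s` is a maximal clique of `G`. -/
def IsMaxCliqueOf {V : Type*} (G : SimpleGraph V) (s : Finset V) : Prop :=
  G.IsClique (↑s : Set V) ∧ ∀ t : Finset V, G.IsClique (↑t : Set V) → s ⊆ t → s = t

/-- A dominating `i`-clique of `G`: a set of `i`-cliques such that every maximal clique of
order at least `i` contains some member of the set. -/
def IsDominatingCliqueSet {V : Type*} (G : SimpleGraph V) (i : ℕ)
    (D : Finset (Finset V)) : Prop :=
  (∀ s ∈ D, G.IsNClique i s) ∧
    ∀ t : Finset V, IsMaxCliqueOf G t → i ≤ t.card → ∃ s ∈ D, s ⊆ t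

/-- `d_i(G)`: the minimum cardinality of a dominating `i`-clique of `G`. -/
noncomputable def domNum {V : Type*} (G : SimpleGraph V) (i : ℕ) : ℕ :=
  sInf {k | ∃ D : Finset (Finset V), IsDominatingCliqueSet G i D ∧ D.card = k}

/-- `κ̃(G)`: the maximum cardinality of the intersection of a pair of distinct maximal
cliques of `G`. -/
noncomputable def kappaTilde {V : Type*} [DecidableEq V] (G : SimpleGraph V) : ℕ :=
  sSup {k | ∃ C C' : Finset V, IsMaxCliqueOf G C ∧ IsMaxCliqueOf G C' ∧ C ≠ C' ∧
    (C ∩ C').card = k}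

/-- `G` restricted to the vertex set `s` is a threshold graph: it can be built from a
one-vertex graph by repeatedly adding either an isolated vertex or a vertex adjacent to
all existing vertices. -/
inductive IsThresholdOn {V : Type*} [DecidableEq V] (G : SimpleGraph V) : Finset V → Prop
  | single (v : V) : IsThresholdOn G {v}
  | isolated (s : Finset V) (v : V) (hv : v ∉ s) (hs : IsThresholdOn G s)
      (hiso : ∀ u ∈ s, ¬ G.Adj v u) : IsThresholdOn G (insert v s)
  | dominating (s : Finset V) (v : V) (hv : v ∉ s) (hs : IsThresholdOn G s)
      (hdom : ∀ u ∈ s, G.Adj v u) : IsThresholdOn G (insert v s)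

/-- `G` is a threshold graph. -/
def IsThreshold {V : Type*} [Fintype V] [DecidableEq V] (G : SimpleGraph V) : Prop :=
  IsThresholdOn G Finset.univ

/-- `|C_i(G)|`: the number of maximal cliques of `G` with exactly `i` vertices. -/
noncomputable def maxCliqueCount {V : Type*} [Fintype V] (G : SimpleGraph V) (i : ℕ) : ℕ :=
  {s : Finset V | IsMaxCliqueOf G s ∧ s.card = i}.ncard

/-- `s` is a maximal clique of `G` among the cliques contained in `W`, i.e. a facet of the
restriction of the clique complex of `G` to `W`. -/
def IsMaxCliqueWithin {V : Type*} (G : SimpleGraph V) (W : Finset V) (s : Finset V) : Prop :=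
  s ⊆ W ∧ G.IsClique (↑s : Set V) ∧
    ∀ t : Finset V, t ⊆ W → G.IsClique (↑t : Set V) → s ⊆ t → s = t

/-- The restriction of the clique complex of `G` to `W` is pure: all its facets have the
same cardinality. -/
def PureOn {V : Type*} (G : SimpleGraph V) (W : Finset V) : Prop :=
  ∀ s t : Finset V, IsMaxCliqueWithin G W s → IsMaxCliqueWithin G W t → s.card = t.card

set_option linter.unusedSectionVars false
set_option maxHeartbeats 1000000

def GoodPair {V : Type*} (G : SimpleGraph V) (s : Finset V) (r : V → ℕ) (dom : V → Bool) : Prop :=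
  Set.InjOn r ↑s ∧
    ∀ u ∈ s, ∀ v ∈ s, G.Adj u v ↔ u ≠ v ∧
      ((r u < r v ∧ dom v = true) ∨ (r v < r u ∧ dom u = true))

lemma goodPair_step {V : Type*} [DecidableEq V] {G : SimpleGraph V} {s : Finset V}
    {r : V → ℕ} {dom : V → Bool} (h : GoodPair G s r dom) (v : V) (hv : v ∉ s) (bo : Bool)
    (hnew : ∀ u ∈ s, G.Adj v u ↔ bo = true) :
    GoodPair G (insert v s) (Function.update r v (s.sup r + 1)) (Function.update dom v bo) := by
  obtain ⟨hinj, hadj⟩ := h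
  have hlt : ∀ u ∈ s, r u < s.sup r + 1 := fun u hu => Nat.lt_succ_of_le (le_sup hu)
  have hne : ∀ u ∈ s, u ≠ v := fun u hu h => hv (h ▸ hu)
  constructor
  · intro a ha b hb hab
    simp only [coe_insert, Set.mem_insert_iff] at ha hb
    rcases ha with rfl | ha
    · rcases hb with rfl | hb
      · rfl
      · rw [Function.update_self, Function.update_of_ne (hne b hb)] at hab
        exact absurd hab.symm (Nat.ne_of_lt (hlt b hb))
    · rcases hb with rfl | hb
      · rw [Function.update_self, Function.update_of_ne (hne a ha)] at hab
        exact absurd hab (Nat.ne_of_lt (hlt a ha))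
      · rw [Function.update_of_ne (hne a ha), Function.update_of_ne (hne b hb)] at hab
        exact hinj ha hb hab
  · intro a ha b hb
    rw [mem_insert] at ha hb
    rcases ha with rfl | ha
    · rcases hb with rfl | hb
      · simp [G.irrefl]
      · rw [Function.update_self, Function.update_self,
          Function.update_of_ne (hne b hb), Function.update_of_ne (hne b hb), hnew b hb]
        constructor
        · intro hbo
          exact ⟨(hne b hb).symm, Or.inr ⟨hlt b hb, hbo⟩⟩
        · rintro ⟨-, ⟨h1, -⟩ | ⟨-, h2⟩⟩
          · exact absurd h1 (Nat.not_lt.2 (hlt b hb).le)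
          · exact h2
    · rcases hb with rfl | hb
      · rw [G.adj_comm, Function.update_self, Function.update_self,
          Function.update_of_ne (hne a ha), Function.update_of_ne (hne a ha), hnew a ha]
        constructor
        · intro hbo
          exact ⟨hne a ha, Or.inl ⟨hlt a ha, hbo⟩⟩
        · rintro ⟨-, ⟨-, h2⟩ | ⟨h1, -⟩⟩
          · exact h2
          · exact absurd h1 (Nat.not_lt.2 (le_of_lt (hlt a ha)))
      · rw [Function.update_of_ne (hne a ha), Function.update_of_ne (hne b hb),
          Function.update_of_ne (hne a ha), Function.update_of_ne (hne b hb)]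
        exact hadj a ha b hb

lemma threshold_structure {V : Type*} [DecidableEq V] {G : SimpleGraph V} {s : Finset V}
    (h : IsThresholdOn G s) : ∃ (r : V → ℕ) (dom : V → Bool), GoodPair G s r dom := by
  induction h with
  | single v =>
      refine ⟨fun _ => 0, fun _ => false, ?_, by simp⟩
      simp only [coe_singleton]
      exact Set.injOn_singleton _ _
  | isolated s v hv hs hiso ih =>
      obtain ⟨r, dom, hgp⟩ := ih
      exact ⟨_, _, goodPair_step hgp v hv false (by simpa using hiso)⟩
  | dominating s v hv hs hdom ih =>
      obtain ⟨r, dom, hgp⟩ := ih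
      exact ⟨_, _, goodPair_step hgp v hv true (by simpa using hdom)⟩
section Part2
open scoped Classical
variable {V : Type} [Fintype V] [DecidableEq V]

def Dset (dom : V → Bool) : Finset V := univ.filter (fun v => dom v = true)
def Iset (dom : V → Bool) : Finset V := univ.filter (fun v => dom v = false)
def Aset (r : V → ℕ) (dom : V → Bool) (v : V) : Finset V :=
  (Dset dom).filter (fun u => r v < r u)
def Mset (r : V → ℕ) (dom : V → Bool) (v : V) : Finset V := insert v (Aset r dom v)

variable {G : SimpleGraph V} {r : V → ℕ} {dom : V → Bool}

lemma GoodPair.inj (h : GoodPair G univ r dom) : Function.Injective r :=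
  fun a b hab => h.1 (by simp) (by simp) hab

lemma GoodPair.adj (h : GoodPair G univ r dom) : ∀ u v, G.Adj u v ↔ u ≠ v ∧
    ((r u < r v ∧ dom v = true) ∨ (r v < r u ∧ dom u = true)) :=
  fun u v => h.2 u (mem_univ u) v (mem_univ v)

lemma mem_Dset {v : V} : v ∈ Dset dom ↔ dom v = true := by simp [Dset]
lemma mem_Iset {v : V} : v ∈ Iset dom ↔ dom v = false := by simp [Iset]
lemma mem_Aset {v u : V} : u ∈ Aset r dom v ↔ dom u = true ∧ r v < r u := by
  simp [Aset, mem_Dset, and_comm]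

lemma Aset_subset_Dset {v : V} : Aset r dom v ⊆ Dset dom := filter_subset _ _

lemma notMem_Aset_self {v : V} : v ∉ Aset r dom v := by simp [mem_Aset]

lemma card_Mset {v : V} : (Mset r dom v).card = (Aset r dom v).card + 1 :=
  card_insert_of_notMem notMem_Aset_self

lemma clique_Dset (h : GoodPair G univ r dom) {t : Finset V} (ht : t ⊆ Dset dom) :
    G.IsClique ↑t := by
  intro a ha b hb hne
  have hda : dom a = true := mem_Dset.1 (ht ha)
  have hdb : dom b = true := mem_Dset.1 (ht hb)
  rcases lt_or_gt_of_ne (fun hr => hne (h.inj hr)) with hlt | hlt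
  · exact (h.adj a b).2 ⟨hne, Or.inl ⟨hlt, hdb⟩⟩
  · exact (h.adj a b).2 ⟨hne, Or.inr ⟨hlt, hda⟩⟩

lemma clique_Mset (h : GoodPair G univ r dom) (v : V) : G.IsClique ↑(Mset r dom v) := by
  intro a ha b hb hne
  simp only [Mset, coe_insert, Set.mem_insert_iff, mem_coe] at ha hb
  rcases ha with rfl | ha
  · rcases hb with rfl | hb
    · exact absurd rfl hne
    · exact (h.adj a b).2 ⟨hne, Or.inl ⟨(mem_Aset.1 hb).2, (mem_Aset.1 hb).1⟩⟩
  · rcases hb with rfl | hb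
    · exact (h.adj a b).2 ⟨hne, Or.inr ⟨(mem_Aset.1 ha).2, (mem_Aset.1 ha).1⟩⟩
    · exact clique_Dset h (fun u hu => Aset_subset_Dset hu) (by simpa using ha)
        (by simpa using hb) hne

lemma clique_cases (h : GoodPair G univ r dom) {s : Finset V} (hs : G.IsClique ↑s) :
    s ⊆ Dset dom ∨ ∃ v ∈ Iset dom, v ∈ s ∧ s ⊆ Mset r dom v := by
  by_cases hall : ∀ u ∈ s, dom u = true
  · exact Or.inl (fun u hu => mem_Dset.2 (hall u hu))
  · push_neg at hall
    obtain ⟨v, hvs, hdv⟩ := hall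
    have hdv : dom v = false := by simpa using hdv
    refine Or.inr ⟨v, mem_Iset.2 hdv, hvs, fun u hu => ?_⟩
    by_cases huv : u = v
    · simp [Mset, huv]
    · have hadj : G.Adj v u := hs (mem_coe.2 hvs) (mem_coe.2 hu) (Ne.symm huv)
      rcases ((h.adj v u).1 hadj).2 with ⟨h1, h2⟩ | ⟨-, h2⟩
      · exact mem_insert_of_mem (mem_Aset.2 ⟨h2, h1⟩)
      · simp [hdv] at h2

lemma eq_of_mem_Mset (h : GoodPair G univ r dom) {u v : V} (hu : u ∈ Mset r dom v)
    (hdu : dom u = false) : u = v := by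
  rcases mem_insert.1 hu with rfl | hu
  · rfl
  · exact absurd (mem_Aset.1 hu).1 (by simp [hdu])

lemma Mset_max (h : GoodPair G univ r dom) {v : V} (hv : v ∈ Iset dom) :
    IsMaxCliqueOf G (Mset r dom v) := by
  refine ⟨clique_Mset h v, fun t ht hsub => ?_⟩
  rcases clique_cases h ht with htD | ⟨v', hv', hv't, htM⟩
  · exact absurd (mem_Dset.1 (htD (hsub (mem_insert_self v _)))) (by simp [mem_Iset.1 hv])
  · have : v = v' := eq_of_mem_Mset h (htM (hsub (mem_insert_self v _))) (mem_Iset.1 hv)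
    exact Subset.antisymm hsub (this ▸ htM)

lemma Mset_injOn (h : GoodPair G univ r dom) {v v' : V} (hv : v ∈ Iset dom)
    (he : Mset r dom v = Mset r dom v') : v = v' :=
  eq_of_mem_Mset h (he ▸ mem_insert_self v _) (mem_Iset.1 hv)

lemma Mset_ne_Dset {v : V} (hv : v ∈ Iset dom) : Mset r dom v ≠ Dset dom := by
  intro he
  have : v ∈ Dset dom := he ▸ mem_insert_self v _
  simp [mem_Dset, mem_Iset.1 hv] at this
end Part2
section Part3
open scoped Classical
variable {V : Type} [Fintype V] [DecidableEq V] {G : SimpleGraph V} {r : V → ℕ} {dom : V → Bool}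

lemma card_Dset_le (h : GoodPair G univ r dom) {d : ℕ}
    (hdmax : ∀ (m : ℕ) (s : Finset V), G.IsNClique m s → m ≤ d) : (Dset dom).card ≤ d :=
  hdmax _ _ ⟨clique_Dset h Subset.rfl, rfl⟩

lemma card_Aset_le {v : V} : (Aset r dom v).card ≤ (Dset dom).card :=
  card_le_card Aset_subset_Dset

lemma card_Mset_le (h : GoodPair G univ r dom) {d : ℕ}
    (hdmax : ∀ (m : ℕ) (s : Finset V), G.IsNClique m s → m ≤ d) (v : V) :
    (Aset r dom v).card + 1 ≤ d :=
  card_Mset (r := r) (dom := dom) (v := v) ▸ hdmax _ _ ⟨clique_Mset h v, rfl⟩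

lemma d_le_card_Dset_add_one (h : GoodPair G univ r dom) {d : ℕ}
    (hd : ∃ s : Finset V, G.IsNClique d s) : d ≤ (Dset dom).card + 1 := by
  obtain ⟨s, hs, hcard⟩ := hd
  rcases clique_cases h hs with hsD | ⟨v, -, -, hsM⟩
  · exact le_trans (hcard ▸ card_le_card hsD) (Nat.le_succ _)
  · calc d = s.card := hcard.symm
      _ ≤ (Mset r dom v).card := card_le_card hsM
      _ = (Aset r dom v).card + 1 := card_Mset
      _ ≤ (Dset dom).card + 1 := by simpa using card_Aset_le

lemma Dset_max_iff (h : GoodPair G univ r dom) {d : ℕ}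
    (hd : ∃ s : Finset V, G.IsNClique d s)
    (hdmax : ∀ (m : ℕ) (s : Finset V), G.IsNClique m s → m ≤ d) :
    IsMaxCliqueOf G (Dset dom) ↔ (Dset dom).card = d := by
  constructor
  · rintro ⟨-, hmax⟩
    refine le_antisymm (card_Dset_le h hdmax) ?_
    obtain ⟨s, hs, hcard⟩ := hd
    rcases clique_cases h hs with hsD | ⟨v, hv, -, hsM⟩
    · exact hcard ▸ card_le_card hsD
    · have hd_le : d ≤ (Aset r dom v).card + 1 := by
        calc d = s.card := hcard.symm
          _ ≤ (Mset r dom v).card := card_le_card hsM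
          _ = _ := card_Mset
      rcases lt_or_eq_of_le (card_Aset_le (r := r) (dom := dom) (v := v)) with hlt | heq
      · omega
      · exfalso
        have hAD : Aset r dom v = Dset dom :=
          eq_of_subset_of_card_le Aset_subset_Dset (le_of_eq heq.symm)
        have hDM : Dset dom ⊆ Mset r dom v := hAD ▸ subset_insert _ _
        exact Mset_ne_Dset hv ((hmax _ (clique_Mset h v) hDM).symm)
  · intro hkd
    refine ⟨clique_Dset h Subset.rfl, fun t ht hsub => eq_of_subset_of_card_le hsub ?_⟩
    exact le_trans (hdmax _ _ ⟨ht, rfl⟩) (le_of_eq hkd.symm)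

lemma max_clique_classify (h : GoodPair G univ r dom) {d : ℕ}
    (hd : ∃ s : Finset V, G.IsNClique d s)
    (hdmax : ∀ (m : ℕ) (s : Finset V), G.IsNClique m s → m ≤ d) {s : Finset V} :
    IsMaxCliqueOf G s ↔
      (∃ v ∈ Iset dom, s = Mset r dom v) ∨ (s = Dset dom ∧ (Dset dom).card = d) := by
  constructor
  · intro hs
    rcases clique_cases h hs.1 with hsD | ⟨v, hv, -, hsM⟩
    · have : s = Dset dom := hs.2 _ (clique_Dset h Subset.rfl) hsD
      exact Or.inr ⟨this, (Dset_max_iff h hd hdmax).1 (this ▸ hs)⟩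
    · exact Or.inl ⟨v, hv, hs.2 _ (clique_Mset h v) hsM⟩
  · rintro (⟨v, hv, rfl⟩ | ⟨rfl, hkd⟩)
    · exact Mset_max h hv
    · exact (Dset_max_iff h hd hdmax).2 hkd

lemma maxCliqueCount_eq (h : GoodPair G univ r dom) {d : ℕ}
    (hd : ∃ s : Finset V, G.IsNClique d s)
    (hdmax : ∀ (m : ℕ) (s : Finset V), G.IsNClique m s → m ≤ d) (i : ℕ) :
    maxCliqueCount G i = ((Iset dom).filter (fun v => (Aset r dom v).card + 1 = i)).card +
      (if (Dset dom).card = d ∧ i = d then 1 else 0) := by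
  have hset : {s : Finset V | IsMaxCliqueOf G s ∧ s.card = i} =
      ↑(univ.filter (fun s : Finset V => IsMaxCliqueOf G s ∧ s.card = i)) := by
    ext s; simp
  rw [maxCliqueCount, hset, Set.ncard_coe_finset]
  have himg : ∀ s : Finset V, s ∈ ((Iset dom).filter
      (fun v => (Aset r dom v).card + 1 = i)).image (Mset r dom) ↔
      ∃ v ∈ Iset dom, (Aset r dom v).card + 1 = i ∧ s = Mset r dom v := by
    intro s
    simp only [mem_image, mem_filter]
    constructor
    · rintro ⟨v, ⟨hv, hc⟩, rfl⟩; exact ⟨v, hv, hc, rfl⟩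
    · rintro ⟨v, hv, hc, rfl⟩; exact ⟨v, ⟨hv, hc⟩, rfl⟩
  have hcardimg : (((Iset dom).filter (fun v => (Aset r dom v).card + 1 = i)).image
      (Mset r dom)).card = ((Iset dom).filter (fun v => (Aset r dom v).card + 1 = i)).card := by
    apply card_image_of_injOn
    intro v hv v' hv' he
    exact Mset_injOn h (mem_filter.1 hv).1 he
  by_cases hcase : (Dset dom).card = d ∧ i = d
  · rw [if_pos hcase]
    have : univ.filter (fun s : Finset V => IsMaxCliqueOf G s ∧ s.card = i) =
        insert (Dset dom) (((Iset dom).filter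
          (fun v => (Aset r dom v).card + 1 = i)).image (Mset r dom)) := by
      ext s
      simp only [mem_filter, mem_univ, true_and, mem_insert, himg]
      rw [max_clique_classify h hd hdmax]
      constructor
      · rintro ⟨⟨v, hv, rfl⟩ | ⟨rfl, -⟩, hcard⟩
        · exact Or.inr ⟨v, hv, (card_Mset (r:=r) (dom:=dom) (v:=v)) ▸ hcard, rfl⟩
        · exact Or.inl rfl
      · rintro (rfl | ⟨v, hv, hc, rfl⟩)
        · exact ⟨Or.inr ⟨rfl, hcase.1⟩, hcase.1.trans hcase.2.symm⟩
        · exact ⟨Or.inl ⟨v, hv, rfl⟩, (card_Mset (r:=r) (dom:=dom) (v:=v)) ▸ hc⟩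
    rw [this, card_insert_of_notMem, hcardimg, add_comm]
    intro hmem
    obtain ⟨v, hv, -, he⟩ := (himg _).1 hmem
    exact Mset_ne_Dset hv he.symm
  · rw [if_neg hcase, add_zero]
    have : univ.filter (fun s : Finset V => IsMaxCliqueOf G s ∧ s.card = i) =
        ((Iset dom).filter (fun v => (Aset r dom v).card + 1 = i)).image (Mset r dom) := by
      ext s
      simp only [mem_filter, mem_univ, true_and, himg]
      rw [max_clique_classify h hd hdmax]
      constructor
      · rintro ⟨⟨v, hv, rfl⟩ | ⟨rfl, hkd⟩, hcard⟩
        · exact ⟨v, hv, (card_Mset (r:=r) (dom:=dom) (v:=v)) ▸ hcard, rfl⟩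
        · exact absurd ⟨hkd, hcard ▸ hkd.symm ▸ rfl⟩ hcase
      · rintro ⟨v, hv, hc, rfl⟩
        exact ⟨Or.inl ⟨v, hv, rfl⟩, (card_Mset (r:=r) (dom:=dom) (v:=v)) ▸ hc⟩
    rw [this, hcardimg]
end Part3
section Part4
open scoped Classical
variable {V : Type} [Fintype V] [DecidableEq V] {G : SimpleGraph V} {r : V → ℕ} {dom : V → Bool}

noncomputable def CF (G : SimpleGraph V) : Finset (Finset V) :=
  univ.filter (fun s => G.IsClique ↑s)

lemma mem_CF {s : Finset V} : s ∈ CF G ↔ G.IsClique ↑s := by simp [CF]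

lemma CF_eq (h : GoodPair G univ r dom) :
    CF G = (Dset dom).powerset ∪
      (Iset dom).biUnion (fun v => ((Aset r dom v).powerset).image (insert v)) := by
  ext s
  rw [mem_CF, mem_union, mem_powerset, mem_biUnion]
  constructor
  · intro hs
    rcases clique_cases h hs with hsD | ⟨v, hv, hvs, hsM⟩
    · exact Or.inl hsD
    · refine Or.inr ⟨v, hv, mem_image.2 ⟨s.erase v, mem_powerset.2 ?_, insert_erase hvs⟩⟩
      intro u hu
      rcases mem_insert.1 (hsM (erase_subset _ _ hu)) with rfl | h2
      · exact absurd (mem_erase.1 hu).1 (by simp)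
      · exact h2
  · rintro (hsD | ⟨v, hv, hs⟩)
    · exact clique_Dset h hsD
    · obtain ⟨t, ht, rfl⟩ := mem_image.1 hs
      refine (clique_Mset h v).subset ?_
      intro u hu
      rw [Mset, coe_insert]
      rcases mem_insert.1 (mem_coe.1 hu) with rfl | hu2
      · exact Set.mem_insert _ _
      · exact Set.mem_insert_of_mem _ (mem_coe.2 (mem_powerset.1 ht hu2))

lemma sum_powerset_pow (s : Finset V) (x : ℤ) :
    ∑ t ∈ s.powerset, x ^ t.card = (x + 1) ^ s.card := by
  rw [Finset.sum_powerset]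
  have hinner : ∀ j ∈ range (s.card + 1),
      (∑ t ∈ powersetCard j s, x ^ t.card) = x ^ j * (s.card.choose j : ℤ) := by
    intro j hj
    rw [sum_congr rfl (fun t ht => by rw [(mem_powersetCard.1 ht).2]),
      sum_const, card_powersetCard, nsmul_eq_mul, mul_comm]
  rw [sum_congr rfl hinner, add_pow]
  exact sum_congr rfl (fun j hj => by ring)

lemma sum_CF (h : GoodPair G univ r dom) (x : ℤ) :
    ∑ s ∈ CF G, x ^ s.card =
      (x + 1) ^ (Dset dom).card + x * ∑ v ∈ Iset dom, (x + 1) ^ (Aset r dom v).card := by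
  have hvnotmem : ∀ v ∈ Iset dom, ∀ t ∈ (Aset r dom v).powerset, v ∉ t := by
    intro v hv t ht hvt
    have := mem_Dset.1 (Aset_subset_Dset (mem_powerset.1 ht hvt))
    simp [mem_Iset.1 hv] at this
  have hdisj : Disjoint ((Dset dom).powerset)
      ((Iset dom).biUnion (fun v => ((Aset r dom v).powerset).image (insert v))) := by
    rw [disjoint_left]
    intro s hsP hsB
    obtain ⟨v, hv, hs⟩ := mem_biUnion.1 hsB
    obtain ⟨t, ht, rfl⟩ := mem_image.1 hs
    have := mem_Dset.1 (mem_powerset.1 hsP (mem_insert_self v t))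
    simp [mem_Iset.1 hv] at this
  have hpair : (↑(Iset dom) : Set V).PairwiseDisjoint
      (fun v => ((Aset r dom v).powerset).image (insert v)) := by
    intro v hv v' hv' hne
    simp only [Function.onFun]
    rw [Finset.disjoint_left]
    intro s hs hs'
    obtain ⟨t, ht, rfl⟩ := mem_image.1 hs
    obtain ⟨t', ht', he⟩ := mem_image.1 hs'
    apply hne
    have hvmem : v ∈ insert v' t' := he.symm ▸ mem_insert_self v t
    rcases mem_insert.1 hvmem with h1 | h1
    · exact h1
    · exact absurd (mem_Dset.1 (Aset_subset_Dset (mem_powerset.1 ht' h1)))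
        (by simp [mem_Iset.1 (mem_coe.1 hv)])
  rw [CF_eq h, sum_union hdisj, sum_biUnion hpair, sum_powerset_pow]
  congr 1
  rw [mul_comm, sum_mul]
  refine sum_congr rfl (fun v hv => ?_)
  rw [Finset.sum_image (fun t ht t' ht' he => by
    rw [← erase_insert (hvnotmem v hv t ht), he, erase_insert (hvnotmem v hv t' ht')])]
  rw [← sum_powerset_pow (Aset r dom v) x, sum_mul]
  refine sum_congr rfl (fun t ht => ?_)
  rw [card_insert_of_notMem (hvnotmem v hv t ht), pow_succ]

lemma cliqueCount_eq (i : ℕ) :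
    cliqueCount G i = ((CF G).filter (fun s => s.card = i)).card := by
  have hset : {s : Finset V | G.IsNClique i s} =
      ↑((CF G).filter (fun s => s.card = i)) := by
    ext s
    simp [SimpleGraph.isNClique_iff, mem_CF]
  rw [cliqueCount, hset, Set.ncard_coe_finset]

lemma sum_Icc_one (d : ℕ) (g : ℕ → ℤ) : ∑ i ∈ Icc 1 d, g i = ∑ i ∈ range d, g (i + 1) := by
  rw [← Finset.Ico_add_one_right_eq_Icc, Finset.sum_Ico_eq_sum_range]
  exact sum_congr (by norm_num) (fun i _ => by rw [Nat.add_comm])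

lemma sum_CF_card {d : ℕ} (hdmax : ∀ (m : ℕ) (s : Finset V), G.IsNClique m s → m ≤ d)
    (x : ℤ) : ∑ s ∈ CF G, x ^ s.card = 1 + ∑ i ∈ Icc 1 d, (cliqueCount G i : ℤ) * x ^ i := by
  have hmap : ∀ s ∈ CF G, s.card ∈ range (d + 1) := fun s hs =>
    mem_range.2 (Nat.lt_succ_of_le (hdmax _ _ ⟨mem_CF.1 hs, rfl⟩))
  rw [← Finset.sum_fiberwise_of_maps_to hmap (fun s => x ^ s.card)]
  have hinner : ∀ i ∈ range (d + 1),
      (∑ s ∈ (CF G).filter (fun s => s.card = i), x ^ s.card) =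
        (cliqueCount G i : ℤ) * x ^ i := by
    intro i hi
    rw [cliqueCount_eq, sum_congr rfl (fun s hs => by rw [(mem_filter.1 hs).2]),
      sum_const, nsmul_eq_mul]
  rw [sum_congr rfl hinner, Finset.sum_range_succ', sum_Icc_one]
  have h0 : (cliqueCount G 0 : ℤ) * x ^ 0 = 1 := by
    have hone : (CF G).filter (fun s => s.card = 0) = {∅} := by
      ext s
      simp only [mem_filter, mem_CF, Finset.card_eq_zero, mem_singleton]
      constructor
      · rintro ⟨-, rfl⟩; rfl
      · rintro rfl; simp
    rw [cliqueCount_eq, hone]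
    simp
  rw [h0, add_comm]
end Part4
section Part5
open scoped Classical
variable {V : Type} [Fintype V] [DecidableEq V] {G : SimpleGraph V} {r : V → ℕ} {dom : V → Bool}

noncomputable def bbv (r : V → ℕ) (dom : V → Bool) (i : ℕ) : ℕ :=
  (if i ≤ (Dset dom).card then 1 else 0) +
    ((Iset dom).filter (fun v => (Aset r dom v).card + 1 = i)).card

lemma key_bb (h : GoodPair G univ r dom) {d : ℕ}
    (hdmax : ∀ (m : ℕ) (s : Finset V), G.IsNClique m s → m ≤ d)
    (hkd : (Dset dom).card ≤ d) (x : ℤ) :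
    (∑ i ∈ Icc 1 d, (bbv r dom i : ℤ) * (x + 1) ^ (i - 1)) * x =
      ((x + 1) ^ (Dset dom).card - 1) +
        x * ∑ v ∈ Iset dom, (x + 1) ^ (Aset r dom v).card := by
  have hsplit : ∀ i ∈ Icc 1 d, (bbv r dom i : ℤ) * (x + 1) ^ (i - 1) =
      (if i ≤ (Dset dom).card then (1 : ℤ) else 0) * (x + 1) ^ (i - 1) +
      (((Iset dom).filter (fun v => (Aset r dom v).card + 1 = i)).card : ℤ) *
        (x + 1) ^ (i - 1) := by
    intro i hi
    rw [bbv]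
    push_cast
    split_ifs <;> ring
  rw [sum_congr rfl hsplit, sum_add_distrib, add_mul]
  congr 1
  · have e1 : ∀ i ∈ Icc 1 d, (if i ≤ (Dset dom).card then (1:ℤ) else 0) * (x+1)^(i-1)
        = if i ≤ (Dset dom).card then (x+1:ℤ)^(i-1) else 0 := fun i _ => by
      split_ifs <;> ring
    have hfil : (Icc 1 d).filter (fun i => i ≤ (Dset dom).card) = Icc 1 (Dset dom).card := by
      ext i
      simp only [mem_filter, mem_Icc]
      omega
    rw [sum_congr rfl e1, ← sum_filter, hfil, sum_Icc_one]
    have e2 : ∀ i ∈ range (Dset dom).card, (x+1:ℤ)^((i+1)-1) = (x+1)^i := fun i _ => by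
      norm_num
    rw [sum_congr rfl e2]
    simpa using geom_sum_mul (x+1) (Dset dom).card
  · have hmap : ∀ v ∈ Iset dom, (Aset r dom v).card + 1 ∈ Icc 1 d := fun v _ =>
      mem_Icc.2 ⟨Nat.le_add_left 1 _, card_Mset_le h hdmax v⟩
    have h2' : (∑ i ∈ Icc 1 d, (((Iset dom).filter
        (fun v => (Aset r dom v).card + 1 = i)).card : ℤ) * (x+1)^(i-1)) =
        ∑ v ∈ Iset dom, (x+1:ℤ)^(Aset r dom v).card := by
      rw [← Finset.sum_fiberwise_of_maps_to hmap (fun v => (x+1:ℤ)^(Aset r dom v).card)]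
      refine sum_congr rfl (fun i hi => ?_)
      have e : ∀ v ∈ (Iset dom).filter (fun v => (Aset r dom v).card + 1 = i),
          (x+1:ℤ)^(Aset r dom v).card = (x+1:ℤ)^(i-1) := by
        intro v hv
        have hv2 := (mem_filter.1 hv).2
        have : (Aset r dom v).card = i - 1 := by omega
        rw [this]
      rw [sum_congr rfl e, sum_const, nsmul_eq_mul]
    rw [h2', mul_comm]

lemma bval (h : GoodPair G univ r dom) {d : ℕ}
    (hd : ∃ s : Finset V, G.IsNClique d s)
    (hdmax : ∀ (m : ℕ) (s : Finset V), G.IsNClique m s → m ≤ d)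
    {b : ℕ → ℤ}
    (hb : ∀ x : ℤ, ∑ i ∈ Finset.Icc 1 d, b i * (x + 1) ^ (i - 1) =
      ∑ i ∈ Finset.Icc 1 d, (cliqueCount G i : ℤ) * x ^ (i - 1)) :
    ∀ i ∈ Icc 1 d, b i = (bbv r dom i : ℤ) := by
  have hkd : (Dset dom).card ≤ d := card_Dset_le h hdmax
  have key : ∀ x : ℤ, (∑ i ∈ Icc 1 d, b i * (x + 1) ^ (i - 1)) * x =
      (∑ i ∈ Icc 1 d, (bbv r dom i : ℤ) * (x + 1) ^ (i - 1)) * x := by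
    intro x
    rw [hb x, key_bb h hdmax hkd x, sum_mul]
    have e : ∀ i ∈ Icc 1 d, (cliqueCount G i : ℤ) * x ^ (i-1) * x =
        (cliqueCount G i : ℤ) * x ^ i := by
      intro i hi
      rw [mul_assoc, ← pow_succ]
      have : i - 1 + 1 = i := Nat.succ_pred_eq_of_pos (mem_Icc.1 hi).1
      rw [this]
    rw [sum_congr rfl e]
    have hc := (sum_CF_card hdmax x).symm.trans (sum_CF h x)
    linarith [hc]
  have key2 : ∀ y : ℤ, y ≠ 1 →
      ∑ i ∈ Icc 1 d, (b i - (bbv r dom i : ℤ)) * y ^ (i - 1) = 0 := by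
    intro y hy
    have hx := key (y - 1)
    rw [sub_add_cancel] at hx
    have hx2 : (∑ i ∈ Icc 1 d, b i * y ^ (i - 1)) =
        ∑ i ∈ Icc 1 d, (bbv r dom i : ℤ) * y ^ (i - 1) :=
      mul_right_cancel₀ (sub_ne_zero.2 hy) hx
    calc ∑ i ∈ Icc 1 d, (b i - (bbv r dom i : ℤ)) * y ^ (i - 1)
        = (∑ i ∈ Icc 1 d, b i * y ^ (i - 1)) -
          ∑ i ∈ Icc 1 d, (bbv r dom i : ℤ) * y ^ (i - 1) := by
          rw [← sum_sub_distrib]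
          exact sum_congr rfl (fun i _ => by ring)
      _ = 0 := by rw [hx2, sub_self]
  set p : Polynomial ℤ :=
    ∑ i ∈ Icc 1 d, Polynomial.C (b i - (bbv r dom i : ℤ)) * Polynomial.X ^ (i - 1) with hp
  have heval : ∀ y : ℤ, p.eval y = ∑ i ∈ Icc 1 d, (b i - (bbv r dom i : ℤ)) * y ^ (i - 1) := by
    intro y
    rw [hp, Polynomial.eval_finset_sum]
    exact sum_congr rfl (fun i _ => by
      rw [Polynomial.eval_mul, Polynomial.eval_C, Polynomial.eval_pow, Polynomial.eval_X])
  have hp0 : p = 0 := by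
    apply Polynomial.eq_zero_of_infinite_isRoot
    apply Set.Infinite.mono (s := ({1}ᶜ : Set ℤ))
    · intro y hy
      have : y ≠ 1 := hy
      simp only [Set.mem_setOf_eq, Polynomial.IsRoot]
      rw [heval]
      exact key2 y this
    · exact (Set.finite_singleton (1 : ℤ)).infinite_compl
  intro i hi
  have hcoeff : p.coeff (i - 1) = b i - (bbv r dom i : ℤ) := by
    rw [hp, Polynomial.finset_sum_coeff]
    rw [Finset.sum_eq_single i]
    · rw [Polynomial.coeff_C_mul, Polynomial.coeff_X_pow, if_pos rfl, mul_one]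
    · intro j hj hji
      rw [Polynomial.coeff_C_mul, Polynomial.coeff_X_pow, if_neg, mul_zero]
      have h1 := (mem_Icc.1 hj).1
      have h2 := (mem_Icc.1 hi).1
      omega
    · intro hni
      exact absurd hi hni
  rw [hp0, Polynomial.coeff_zero] at hcoeff
  linarith [hcoeff]

lemma thresholdOn_nonempty {G : SimpleGraph V} {s : Finset V} (h : IsThresholdOn G s) :
    s.Nonempty := by
  cases h with
  | single v => exact ⟨v, mem_singleton_self v⟩
  | isolated s v hv hs hiso => exact insert_nonempty v s
  | dominating s v hv hs hdom => exact insert_nonempty v s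
end Part5
/-- For a non-complete threshold graph `T` with vertex connectivity `κ`, largest clique
size `d` and `b`-vector `b`, one has `b i - 1 = |C_i(T)|` for every `κ + 1 ≤ i ≤ d - 1`,
and `b d = |C_d(T)|`, where `C_i(T)` is the set of maximal cliques of `T` with exactly
`i` vertices. -/
theorem stmt6 {V : Type} [Fintype V] [DecidableEq V] (T : SimpleGraph V)
    (hnc : T ≠ ⊤) (hth : IsThreshold T)
    (d : ℕ) (hd : ∃ s : Finset V, T.IsNClique d s)
    (hdmax : ∀ (m : ℕ) (s : Finset V), T.IsNClique m s → m ≤ d)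
    (b : ℕ → ℤ)
    (hb : ∀ x : ℤ, ∑ i ∈ Finset.Icc 1 d, b i * (x + 1) ^ (i - 1) =
      ∑ i ∈ Finset.Icc 1 d, (cliqueCount T i : ℤ) * x ^ (i - 1)) :
    (∀ i : ℕ, vertexConnectivity T + 1 ≤ i → i ≤ d - 1 →
      b i - 1 = (maxCliqueCount T i : ℤ)) ∧
    b d = (maxCliqueCount T d : ℤ) := by
  classical
  obtain ⟨r, dom, h⟩ := threshold_structure hth
  obtain ⟨v0, -⟩ := thresholdOn_nonempty hth
  have hd1 : 1 ≤ d := hdmax 1 {v0} ⟨by simp, card_singleton v0⟩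
  have hkd : (Dset dom).card ≤ d := card_Dset_le h hdmax
  have hdk1 : d ≤ (Dset dom).card + 1 := d_le_card_Dset_add_one h hd
  have hbv := bval h hd hdmax hb
  constructor
  · intro i h1 h2
    have h1' : 1 ≤ i := le_trans (Nat.le_add_left 1 _) h1
    have hid : i < d := by omega
    rw [hbv i (mem_Icc.2 ⟨h1', hid.le⟩), maxCliqueCount_eq h hd hdmax i,
      if_neg (by omega : ¬((Dset dom).card = d ∧ i = d))]
    have hik : i ≤ (Dset dom).card := by omega
    rw [bbv, if_pos hik]
    push_cast
    ring
  · rw [hbv d (mem_Icc.2 ⟨hd1, le_refl d⟩), maxCliqueCount_eq h hd hdmax d, bbv]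
    by_cases hkdeq : (Dset dom).card = d
    · rw [if_pos (by omega : d ≤ (Dset dom).card), if_pos ⟨hkdeq, rfl⟩]
      push_cast
      ring
    · rw [if_neg (by omega : ¬ d ≤ (Dset dom).card), if_neg (fun hc => hkdeq hc.1)]
      push_cast
      ring
end

section
/- Let T be a threshold graph that is not complete, with largest clique size d. Then b_i = d_i(T) for every i = 1, …, d. -/
open Finset

section ThresholdAux

open Finset

lemma IsThresholdOn.nonempty' {V : Type*} [DecidableEq V] {G : SimpleGraph V} {s : Finset V}
    (h : IsThresholdOn G s) : s.Nonempty := by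
  induction h with
  | single v => exact ⟨v, mem_singleton_self v⟩
  | isolated s v hv hs hiso ih => exact ⟨v, mem_insert_self v s⟩
  | dominating s v hv hs hdom ih => exact ⟨v, mem_insert_self v s⟩

def ThreshData {V : Type*} (G : SimpleGraph V) (s : Finset V)
    (rank : V → ℕ) (dm : V → Bool) : Prop :=
  Set.InjOn rank ↑s ∧
  (∀ u ∈ s, ∀ v ∈ s, G.Adj u v ↔
    (rank u < rank v ∧ dm v = true) ∨ (rank v < rank u ∧ dm u = true)) ∧
  (∀ u ∈ s, dm u = true → ∃ w ∈ s, rank w < rank u)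

lemma thresh_step {V : Type*} [DecidableEq V] {G : SimpleGraph V} {s : Finset V} {v : V}
    (hv : v ∉ s) (c : Bool) (hc : ∀ u ∈ s, G.Adj v u ↔ c = true) (hsne : s.Nonempty)
    {rank : V → ℕ} {dm : V → Bool} (ih : ThreshData G s rank dm) :
    ∃ (rank' : V → ℕ) (dm' : V → Bool), ThreshData G (insert v s) rank' dm' := by
  obtain ⟨hinj, hadj, hmin⟩ := ih
  set M := s.sup rank with hM
  refine ⟨fun u => if u = v then M + 1 else rank u,
    fun u => if u = v then c else dm u, ?_, ?_, ?_⟩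
  · intro a ha b hb hab
    simp only [coe_insert, Set.mem_insert_iff, mem_coe] at ha hb
    dsimp only at hab
    by_cases hav : a = v <;> by_cases hbv : b = v
    · rw [hav, hbv]
    · exfalso
      have hbs : b ∈ s := hb.resolve_left hbv
      rw [if_pos hav, if_neg hbv] at hab
      have := Finset.le_sup (f := rank) hbs
      omega
    · exfalso
      have has : a ∈ s := ha.resolve_left hav
      rw [if_neg hav, if_pos hbv] at hab
      have := Finset.le_sup (f := rank) has
      omega
    · rw [if_neg hav, if_neg hbv] at hab
      exact hinj (ha.resolve_left hav) (hb.resolve_left hbv) hab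
  · intro a ha b hb
    simp only [mem_insert] at ha hb
    dsimp only
    by_cases hav : a = v <;> by_cases hbv : b = v
    · rw [hav, hbv]; simp
    · have hbs : b ∈ s := hb.resolve_left hbv
      subst hav
      rw [if_pos rfl, if_neg hbv]
      have := Finset.le_sup (f := rank) hbs
      constructor
      · intro hAdj
        right
        exact ⟨by omega, by rw [if_pos rfl]; exact (hc b hbs).mp hAdj⟩
      · rintro (⟨h1, _⟩ | ⟨_, h2⟩)
        · omega
        · rw [if_pos rfl] at h2
          exact (hc b hbs).mpr h2
    · have has : a ∈ s := ha.resolve_left hav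
      subst hbv
      rw [if_pos rfl, if_neg hav]
      have := Finset.le_sup (f := rank) has
      constructor
      · intro hAdj
        left
        exact ⟨by omega, by rw [if_pos rfl]; exact (hc a has).mp hAdj.symm⟩
      · rintro (⟨_, h2⟩ | ⟨h1, _⟩)
        · rw [if_pos rfl] at h2
          exact ((hc a has).mpr h2).symm
        · omega
    · have has : a ∈ s := ha.resolve_left hav
      have hbs : b ∈ s := hb.resolve_left hbv
      rw [if_neg hav, if_neg hbv, if_neg hav, if_neg hbv]
      exact hadj a has b hbs
  · intro u hu hdmu
    simp only [mem_insert] at hu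
    dsimp only at hdmu ⊢
    by_cases huv : u = v
    · obtain ⟨w, hws⟩ := hsne
      have hwv : w ≠ v := fun h => hv (h ▸ hws)
      have := Finset.le_sup (f := rank) hws
      exact ⟨w, mem_insert_of_mem hws, by rw [if_neg hwv, if_pos huv]; omega⟩
    · have hus : u ∈ s := hu.resolve_left huv
      rw [if_neg huv] at hdmu
      obtain ⟨w, hws, hw⟩ := hmin u hus hdmu
      have hwv : w ≠ v := fun h => hv (h ▸ hws)
      exact ⟨w, mem_insert_of_mem hws, by rw [if_neg hwv, if_neg huv]; exact hw⟩

lemma thresh_struct {V : Type*} [DecidableEq V] (G : SimpleGraph V) (s : Finset V)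
    (h : IsThresholdOn G s) :
    ∃ (rank : V → ℕ) (dm : V → Bool), ThreshData G s rank dm := by
  induction h with
  | single v =>
      refine ⟨fun _ => 0, fun _ => false, ?_, ?_, by simp⟩
      · intro a ha b hb _
        simp only [coe_singleton, Set.mem_singleton_iff] at ha hb
        rw [ha, hb]
      · intro a ha b hb
        simp only [mem_singleton] at ha hb
        subst ha; subst hb
        simp
  | isolated s v hv hs hiso ih =>
      obtain ⟨rank, dm, ih⟩ := ih
      exact thresh_step hv false (fun u hu => by simp [hiso u hu]) hs.nonempty' ih
  | dominating s v hv hs hdom ih =>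
      obtain ⟨rank, dm, ih⟩ := ih
      exact thresh_step hv true (fun u hu => by simp [hdom u hu]) hs.nonempty' ih

section CliqueAux
variable {V : Type*} [Fintype V] [DecidableEq V]
variable {T : SimpleGraph V} {rank : V → ℕ} {dm : V → Bool}

def Dab (rank : V → ℕ) (dm : V → Bool) (w : V) : Finset V :=
  univ.filter (fun u => dm u = true ∧ rank w < rank u)

omit [DecidableEq V] in
lemma mem_Dab {w u : V} : u ∈ Dab rank dm w ↔ dm u = true ∧ rank w < rank u := by
  simp [Dab]

omit [DecidableEq V] in
lemma Dab_antitone {w w' : V} (h : rank w ≤ rank w') : Dab rank dm w' ⊆ Dab rank dm w := by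
  intro u hu
  rw [mem_Dab] at hu ⊢
  exact ⟨hu.1, lt_of_le_of_lt h hu.2⟩

omit [DecidableEq V] in
lemma notMem_Dab_self {w : V} : w ∉ Dab rank dm w := by
  rw [mem_Dab]; simp

omit [Fintype V] [DecidableEq V] in
lemma clique_iff (hinj : Function.Injective rank)
    (hadj : ∀ u v, T.Adj u v ↔
      (rank u < rank v ∧ dm v = true) ∨ (rank v < rank u ∧ dm u = true))
    (s : Finset V) :
    T.IsClique ↑s ↔ ∀ v ∈ s, ∀ u ∈ s, rank u < rank v → dm v = true := by
  constructor
  · intro h v hv u hu hlt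
    have hne : u ≠ v := fun e => absurd (e ▸ hlt) (lt_irrefl _)
    have := h (mem_coe.mpr hu) (mem_coe.mpr hv) hne
    rw [hadj] at this
    rcases this with ⟨_, h2⟩ | ⟨h1, _⟩
    · exact h2
    · omega
  · intro h a ha b hb hne
    have hr : rank a ≠ rank b := fun e => hne (hinj e)
    rcases lt_or_gt_of_ne hr with hlt | hgt
    · exact (hadj a b).mpr (Or.inl ⟨hlt, h b (mem_coe.mp hb) a (mem_coe.mp ha) hlt⟩)
    · exact (hadj a b).mpr (Or.inr ⟨hgt, h a (mem_coe.mp ha) b (mem_coe.mp hb) hgt⟩)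

lemma clique_insert_Dab (hinj : Function.Injective rank)
    (hadj : ∀ u v, T.Adj u v ↔
      (rank u < rank v ∧ dm v = true) ∨ (rank v < rank u ∧ dm u = true))
    (w : V) : T.IsClique ↑(insert w (Dab rank dm w)) := by
  rw [clique_iff hinj hadj]
  intro v hv u hu hlt
  rcases mem_insert.mp hv with rfl | hvd
  · exfalso
    rcases mem_insert.mp hu with rfl | hud
    · exact absurd hlt (lt_irrefl _)
    · exact absurd hlt (not_lt.mpr (le_of_lt (mem_Dab.mp hud).2))
  · exact (mem_Dab.mp hvd).1

lemma maxclique_of (hinj : Function.Injective rank)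
    (hadj : ∀ u v, T.Adj u v ↔
      (rank u < rank v ∧ dm v = true) ∨ (rank v < rank u ∧ dm u = true))
    {w : V} (hw : dm w = false) :
    IsMaxCliqueOf T (insert w (Dab rank dm w)) := by
  refine ⟨clique_insert_Dab hinj hadj w, ?_⟩
  intro t ht hsub
  refine Finset.Subset.antisymm hsub ?_
  intro u hut
  have hwt : w ∈ t := hsub (mem_insert_self _ _)
  rcases lt_trichotomy (rank u) (rank w) with h1 | h2 | h3
  · exfalso
    have : dm w = true := (clique_iff hinj hadj t).mp ht w hwt u hut h1
    rw [hw] at this; exact Bool.false_ne_true this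
  · exact mem_insert.mpr (Or.inl (hinj h2))
  · have : dm u = true := (clique_iff hinj hadj t).mp ht u hut w hwt h3
    exact mem_insert_of_mem (mem_Dab.mpr ⟨this, h3⟩)

lemma maxclique_char [Nonempty V] (hinj : Function.Injective rank)
    (hadj : ∀ u v, T.Adj u v ↔
      (rank u < rank v ∧ dm v = true) ∨ (rank v < rank u ∧ dm u = true))
    (hmin : ∀ u, dm u = true → ∃ w, rank w < rank u)
    {s : Finset V} (hs : IsMaxCliqueOf T s) :
    ∃ w, dm w = false ∧ s = insert w (Dab rank dm w) := by
  obtain ⟨hc, hmax⟩ := hs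
  have hne : s.Nonempty := by
    rcases s.eq_empty_or_nonempty with rfl | hne
    · exfalso
      obtain ⟨v⟩ := ‹Nonempty V›
      have : (∅ : Finset V) = {v} := hmax {v} (by simp) (empty_subset _)
      exact Finset.singleton_ne_empty v this.symm
    · exact hne
  obtain ⟨w, hws, hwmin⟩ := Finset.exists_min_image s rank hne
  have hwdm : dm w = false := by
    by_contra h
    have hdmw : dm w = true := by
      cases hdm : dm w
      · exact absurd hdm h
      · rfl
    obtain ⟨u, hu⟩ := hmin w hdmw
    have hus : u ∉ s := fun h' => absurd (hwmin u h') (by omega)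
    have hclique : T.IsClique ↑(insert u s) := by
      rw [clique_iff hinj hadj]
      intro x hx y hy hlt
      rcases mem_insert.mp hx with rfl | hxs
      · exfalso
        rcases mem_insert.mp hy with rfl | hys
        · exact absurd hlt (lt_irrefl _)
        · have := hwmin y hys; omega
      · by_cases hxw : x = w
        · subst hxw; exact hdmw
        · have hwx : rank w < rank x := by
            have := hwmin x hxs
            rcases lt_or_eq_of_le this with h' | h'
            · exact h'
            · exact absurd (hinj h') (Ne.symm hxw)
          exact (clique_iff hinj hadj s).mp hc x hxs w hws hwx
    have := hmax _ hclique (subset_insert _ _)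
    exact hus (this ▸ mem_insert_self u s)
  refine ⟨w, hwdm, ?_⟩
  apply Finset.Subset.antisymm
  · intro v hvs
    by_cases hvw : v = w
    · exact hvw ▸ mem_insert_self _ _
    · have hwv : rank w < rank v := by
        have := hwmin v hvs
        rcases lt_or_eq_of_le this with h' | h'
        · exact h'
        · exact absurd (hinj h') (Ne.symm hvw)
      exact mem_insert_of_mem (mem_Dab.mpr
        ⟨(clique_iff hinj hadj s).mp hc v hvs w hws hwv, hwv⟩)
  · intro u hu
    rcases mem_insert.mp hu with rfl | hud
    · exact hws
    · have hclique : T.IsClique ↑(insert u s) := by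
        rw [clique_iff hinj hadj]
        intro x hx y hy hlt
        rcases mem_insert.mp hx with rfl | hxs
        · exact (mem_Dab.mp hud).1
        · by_cases hxw : x = w
          · exfalso
            subst hxw
            rcases mem_insert.mp hy with rfl | hys
            · exact absurd (lt_trans (mem_Dab.mp hud).2 hlt) (lt_irrefl _)
            · have := hwmin y hys; omega
          · have hwx : rank w < rank x := by
              have := hwmin x hxs
              rcases lt_or_eq_of_le this with h' | h'
              · exact h'
              · exact absurd (hinj h') (Ne.symm hxw)
            exact (clique_iff hinj hadj s).mp hc x hxs w hws hwx
      have := hmax _ hclique (subset_insert _ _)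
      exact this ▸ mem_insert_self u s

omit [Fintype V] in
lemma powerset_sum (A : Finset V) (x : ℤ) :
    ∑ S ∈ A.powerset, x ^ S.card = (x + 1) ^ A.card := by
  have := Finset.prod_add (fun _ : V => x) (fun _ : V => 1) A
  simp only [Finset.prod_const, one_pow, mul_one] at this
  rw [← this]

omit [DecidableEq V] in
lemma coeff_extract (d : ℕ) (b : ℕ → ℤ) (g : V → ℕ)
    (h : ∀ y : ℤ, ∑ i ∈ Icc 1 d, b i * y ^ (i-1) = ∑ w : V, y ^ (g w))
    (i : ℕ) (hi1 : 1 ≤ i) (hi2 : i ≤ d) :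
    b i = ((univ.filter (fun w : V => g w = i - 1)).card : ℤ) := by
  classical
  have hpoly : (∑ j ∈ Icc 1 d, Polynomial.C (b j) * Polynomial.X ^ (j-1)) =
      ∑ w : V, (Polynomial.X : Polynomial ℤ) ^ (g w) := by
    apply Polynomial.funext
    intro y
    simp only [Polynomial.eval_finset_sum, Polynomial.eval_mul, Polynomial.eval_C,
      Polynomial.eval_pow, Polynomial.eval_X]
    exact h y
  have hcoeff := congrArg (fun p => Polynomial.coeff p (i-1)) hpoly
  simp only [Polynomial.finset_sum_coeff, Polynomial.coeff_C_mul,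
    Polynomial.coeff_X_pow] at hcoeff
  rw [Finset.sum_eq_single i (fun j hj hne => by
      rw [if_neg, mul_zero]
      simp only [mem_Icc] at hj
      omega) (fun h => absurd (mem_Icc.mpr ⟨hi1, hi2⟩) h)] at hcoeff
  rw [if_pos rfl, mul_one] at hcoeff
  rw [hcoeff, Finset.sum_boole]
  norm_cast
  congr 1
  apply Finset.filter_congr
  intro w _
  simp [eq_comm]

end CliqueAux

end ThresholdAux

/-- For a non-complete threshold graph `T` with largest clique size `d` and `b`-vector
`b`, one has `b i = d_i(T)` for every `1 ≤ i ≤ d`. -/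
theorem stmt7 {V : Type} [Fintype V] [DecidableEq V] (T : SimpleGraph V)
    (hnc : T ≠ ⊤) (hth : IsThreshold T)
    (d : ℕ) (hd : ∃ s : Finset V, T.IsNClique d s)
    (hdmax : ∀ (m : ℕ) (s : Finset V), T.IsNClique m s → m ≤ d)
    (b : ℕ → ℤ)
    (hb : ∀ x : ℤ, ∑ i ∈ Finset.Icc 1 d, b i * (x + 1) ^ (i - 1) =
      ∑ i ∈ Finset.Icc 1 d, (cliqueCount T i : ℤ) * x ^ (i - 1))
    (i : ℕ) (hi1 : 1 ≤ i) (hi2 : i ≤ d) :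
    b i = (domNum T i : ℤ) := by
  classical
  obtain ⟨rank, dm, hinj0, hadj0, hmin0⟩ := thresh_struct T univ hth
  have hinj : Function.Injective rank := fun a b h => hinj0 (by simp) (by simp) h
  have hadj : ∀ u v, T.Adj u v ↔
      (rank u < rank v ∧ dm v = true) ∨ (rank v < rank u ∧ dm u = true) :=
    fun u v => hadj0 u (mem_univ u) v (mem_univ v)
  have hmin : ∀ u, dm u = true → ∃ w, rank w < rank u := fun u hu =>
    (hmin0 u (mem_univ u) hu).imp (fun w hw => hw.2)
  have hVne : Nonempty V := Finset.univ_nonempty_iff.mp hth.nonempty'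
  set D : Finset V := univ.filter (fun u => dm u = true) with hD
  -- minimum-rank vertex
  obtain ⟨w₀, -, hw₀min0⟩ := Finset.exists_min_image univ rank univ_nonempty
  have hw₀min : ∀ u, rank w₀ ≤ rank u := fun u => hw₀min0 u (mem_univ u)
  have hw₀dm : dm w₀ = false := by
    cases h : dm w₀
    · rfl
    · obtain ⟨w, hw⟩ := hmin w₀ h
      exact absurd (hw₀min w) (by omega)
  have hDabD : ∀ w, Dab rank dm w ⊆ D := fun w u hu => by
    rw [mem_Dab] at hu
    exact mem_filter.mpr ⟨mem_univ u, hu.1⟩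
  have hDab0 : Dab rank dm w₀ = D := by
    apply Finset.Subset.antisymm (hDabD w₀)
    intro u hu
    have hdmu : dm u = true := (mem_filter.mp hu).2
    have hne : u ≠ w₀ := fun h => by rw [h, hw₀dm] at hdmu; exact Bool.false_ne_true hdmu
    exact mem_Dab.mpr ⟨hdmu, (hw₀min u).lt_of_ne (fun h => hne (hinj h).symm)⟩
  -- d = D.card + 1
  have hd1 : d = D.card + 1 := by
    have h1 : D.card + 1 ≤ d := by
      apply hdmax _ (insert w₀ (Dab rank dm w₀))
      refine ⟨clique_insert_Dab hinj hadj w₀, ?_⟩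
      rw [card_insert_of_notMem notMem_Dab_self, hDab0]
    have h2 : d ≤ D.card + 1 := by
      obtain ⟨s, hs⟩ := hd
      obtain ⟨hsclq, hscard⟩ := hs
      rcases s.eq_empty_or_nonempty with rfl | hne
      · simp at hscard; omega
      · obtain ⟨w, hws, hwmin⟩ := Finset.exists_min_image s rank hne
        have hsub : s ⊆ insert w (Dab rank dm w) := by
          intro v hvs
          by_cases hvw : v = w
          · exact hvw ▸ mem_insert_self _ _
          · have hwv : rank w < rank v :=
              (hwmin v hvs).lt_of_ne (fun h => hvw (hinj h).symm)
            exact mem_insert_of_mem (mem_Dab.mpr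
              ⟨(clique_iff hinj hadj s).mp hsclq v hvs w hws hwv, hwv⟩)
        calc d = s.card := hscard.symm
          _ ≤ (insert w (Dab rank dm w)).card := card_le_card hsub
          _ ≤ (Dab rank dm w).card + 1 := card_insert_le _ _
          _ ≤ D.card + 1 := by have := card_le_card (hDabD w); omega
    omega
  -- the set of nonempty cliques
  set E : Finset (Finset V) := univ.filter (fun s : Finset V => T.IsClique ↑s ∧ s.Nonempty)
    with hE
  have hmemE : ∀ s : Finset V, s ∈ E ↔ T.IsClique ↑s ∧ s.Nonempty := fun s => by
    rw [hE, mem_filter]; simp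
  have hEdef : E = univ.biUnion (fun w => ((Dab rank dm w).powerset).image (insert w)) := by
    ext s
    rw [hmemE, mem_biUnion]
    constructor
    · rintro ⟨hclq, hne⟩
      obtain ⟨w, hws, hwmin⟩ := Finset.exists_min_image s rank hne
      refine ⟨w, mem_univ w, mem_image.mpr ⟨s.erase w, mem_powerset.mpr ?_, insert_erase hws⟩⟩
      intro v hv
      obtain ⟨hvw, hvs⟩ := mem_erase.mp hv
      have hwv : rank w < rank v := (hwmin v hvs).lt_of_ne (fun h => hvw (hinj h).symm)
      exact mem_Dab.mpr ⟨(clique_iff hinj hadj s).mp hclq v hvs w hws hwv, hwv⟩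
    · rintro ⟨w, -, hs⟩
      obtain ⟨S, hS, rfl⟩ := mem_image.mp hs
      refine ⟨?_, insert_nonempty _ _⟩
      exact (clique_insert_Dab hinj hadj w).subset
        (coe_subset.mpr (insert_subset_insert w (mem_powerset.mp hS)))
  have hcc : ∀ j, 1 ≤ j → cliqueCount T j = (E.filter (fun s => s.card = j)).card := by
    intro j hj
    have hset : {s : Finset V | T.IsNClique j s} = ↑(E.filter (fun s => s.card = j)) := by
      ext s
      simp only [Set.mem_setOf_eq, mem_coe, mem_filter, hmemE, SimpleGraph.isNClique_iff]
      constructor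
      · rintro ⟨h1, h2⟩
        exact ⟨⟨h1, card_pos.mp (by omega)⟩, h2⟩
      · tauto
    rw [cliqueCount, hset, Set.ncard_coe_finset]
  have hsum1 : ∀ x : ℤ, ∑ j ∈ Icc 1 d, (cliqueCount T j : ℤ) * x ^ (j-1)
      = ∑ s ∈ E, x ^ (s.card - 1) := by
    intro x
    rw [← Finset.sum_fiberwise_of_maps_to (g := fun s : Finset V => s.card)
      (t := Icc 1 d) ?_ (fun s => x ^ (s.card - 1))]
    · apply Finset.sum_congr rfl
      intro j hj
      rw [hcc j (mem_Icc.mp hj).1,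
        show (∑ s ∈ E.filter (fun s => s.card = j), x ^ (s.card - 1))
          = ∑ _s ∈ E.filter (fun s => s.card = j), x ^ (j - 1) from
          Finset.sum_congr rfl (fun s hs => by rw [(mem_filter.mp hs).2]),
        sum_const, nsmul_eq_mul]
    · intro s hsE
      rw [hmemE] at hsE
      rw [mem_Icc]
      exact ⟨card_pos.mpr hsE.2, hdmax s.card s ⟨hsE.1, rfl⟩⟩
  have hdisj : (↑(univ : Finset V) : Set V).PairwiseDisjoint
      (fun w => ((Dab rank dm w).powerset).image (insert w)) := by
    intro w _ w' _ hne
    rw [Function.onFun, Finset.disjoint_left]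
    intro s hs hs'
    obtain ⟨S, hS, rfl⟩ := mem_image.mp hs
    obtain ⟨S', hS', heq⟩ := mem_image.mp hs'
    have hw'1 : w' ∈ insert w S := heq ▸ mem_insert_self w' S'
    have hw1 : w ∈ insert w' S' := by rw [heq]; exact mem_insert_self w S
    rcases mem_insert.mp hw'1 with h | h
    · exact hne h.symm
    · have h1 : rank w < rank w' := (mem_Dab.mp (mem_powerset.mp hS h)).2
      rcases mem_insert.mp hw1 with h' | h'
      · exact hne h'
      · have h2 : rank w' < rank w := (mem_Dab.mp (mem_powerset.mp hS' h')).2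
        omega
  have hsum2 : ∀ x : ℤ, ∑ s ∈ E, x ^ (s.card - 1)
      = ∑ w : V, (x + 1) ^ ((Dab rank dm w).card) := by
    intro x
    rw [hEdef, Finset.sum_biUnion hdisj]
    apply Finset.sum_congr rfl
    intro w _
    rw [Finset.sum_image (fun S hS S' hS' hinseq => by
      have hwS : w ∉ S := fun h => notMem_Dab_self (mem_powerset.mp hS h)
      have hwS' : w ∉ S' := fun h => notMem_Dab_self (mem_powerset.mp hS' h)
      rw [← erase_insert hwS, ← erase_insert hwS', hinseq])]
    rw [← powerset_sum]
    apply Finset.sum_congr rfl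
    intro S hS
    have hwS : w ∉ S := fun h => notMem_Dab_self (mem_powerset.mp hS h)
    rw [card_insert_of_notMem hwS]
    simp
  have heval : ∀ y : ℤ, ∑ j ∈ Icc 1 d, b j * y ^ (j-1)
      = ∑ w : V, y ^ ((Dab rank dm w).card) := by
    intro y
    have := hb (y - 1)
    rw [hsum1 (y-1), hsum2 (y-1)] at this
    simpa using this
  have hbC : b i = ((univ.filter
      (fun w : V => (Dab rank dm w).card = i - 1)).card : ℤ) :=
    coeff_extract d b _ heval i hi1 hi2
  -- analysis of dominating vertices
  have hNlt : ∀ w w', dm w' = true → rank w < rank w' →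
      (Dab rank dm w').card < (Dab rank dm w).card := by
    intro w w' hdm hlt
    apply card_lt_card
    exact ⟨Dab_antitone hlt.le, fun hsub =>
      notMem_Dab_self (hsub (mem_Dab.mpr ⟨hdm, hlt⟩))⟩
  have hNinj : Set.InjOn (fun w => (Dab rank dm w).card) ↑D := by
    intro w hw w' hw' heq
    by_contra hne
    have hr : rank w ≠ rank w' := fun h => hne (hinj h)
    have hdmw : dm w = true := (mem_filter.mp (mem_coe.mp hw)).2
    have hdmw' : dm w' = true := (mem_filter.mp (mem_coe.mp hw')).2
    dsimp at heq
    rcases lt_or_gt_of_ne hr with h | h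
    · have := hNlt w w' hdmw' h; omega
    · have := hNlt w' w hdmw h; omega
  have hNltD : ∀ w ∈ D, (Dab rank dm w).card < D.card := by
    intro w hw
    have hsub : Dab rank dm w ⊆ D.erase w := by
      intro u hu
      rw [mem_Dab] at hu
      refine mem_erase.mpr ⟨?_, mem_filter.mpr ⟨mem_univ u, hu.1⟩⟩
      rintro rfl
      exact absurd hu.2 (lt_irrefl _)
    have h1 := card_le_card hsub
    rw [card_erase_of_mem hw] at h1
    have h2 : 1 ≤ D.card := card_pos.mpr ⟨w, hw⟩
    omega
  have himg : D.image (fun w => (Dab rank dm w).card) = range D.card := by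
    apply Finset.eq_of_subset_of_card_le
    · intro j hj
      obtain ⟨w, hw, rfl⟩ := mem_image.mp hj
      exact mem_range.mpr (hNltD w hw)
    · rw [card_range, Finset.card_image_of_injOn hNinj]
  -- splitting the count
  set Wnd : Finset V := univ.filter
    (fun w => dm w = false ∧ (Dab rank dm w).card = i - 1) with hWnd
  have hsplit : (univ.filter (fun w => (Dab rank dm w).card = i - 1)).card
      = Wnd.card + (univ.filter
        (fun w => dm w = true ∧ (Dab rank dm w).card = i - 1)).card := by
    have h1 : (univ.filter (fun w => (Dab rank dm w).card = i - 1)).filter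
        (fun w => dm w = false) = Wnd := by
      ext w
      simp only [hWnd, mem_filter, mem_univ, true_and]
      tauto
    have h2 : (univ.filter (fun w => (Dab rank dm w).card = i - 1)).filter
        (fun w => ¬ dm w = false) = univ.filter
        (fun w => dm w = true ∧ (Dab rank dm w).card = i - 1) := by
      ext w
      simp only [mem_filter, mem_univ, true_and, Bool.not_eq_false]
      tauto
    rw [← Finset.card_filter_add_card_filter_not
      (s := univ.filter (fun w => (Dab rank dm w).card = i - 1))
      (p := fun w => dm w = false), h1, h2]
  have hEcard : (univ.filter
      (fun w => dm w = true ∧ (Dab rank dm w).card = i - 1)).card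
      = (if i < d then 1 else 0) := by
    by_cases hid : i < d
    · rw [if_pos hid]
      have hmem : i - 1 ∈ range D.card := mem_range.mpr (by omega)
      rw [← himg] at hmem
      obtain ⟨wd, hwdD, hwdN⟩ := mem_image.mp hmem
      have hfil : univ.filter
          (fun w => dm w = true ∧ (Dab rank dm w).card = i - 1) = {wd} := by
        ext u
        simp only [mem_filter, mem_univ, true_and, mem_singleton]
        constructor
        · rintro ⟨h1, h2⟩
          exact hNinj (mem_coe.mpr (mem_filter.mpr ⟨mem_univ u, h1⟩))
            (mem_coe.mpr hwdD) (by dsimp; rw [h2, hwdN])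
        · rintro rfl
          exact ⟨(mem_filter.mp hwdD).2, hwdN⟩
      rw [hfil, card_singleton]
    · rw [if_neg hid, Finset.card_eq_zero]
      apply Finset.filter_eq_empty_iff.mpr
      intro w _
      rintro ⟨h1, h2⟩
      have := hNltD w (mem_filter.mpr ⟨mem_univ w, h1⟩)
      omega
  -- domNum analysis
  set F : Finset (Finset V) := Wnd.image (fun w => insert w (Dab rank dm w)) with hF
  have hWndmem : ∀ w ∈ Wnd, dm w = false ∧ (Dab rank dm w).card = i - 1 :=
    fun w hw => (mem_filter.mp hw).2
  have hFcard : F.card = Wnd.card := by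
    rw [hF]
    apply Finset.card_image_of_injOn
    intro w hw w' hw' heq
    have heq' : insert w (Dab rank dm w) = insert w' (Dab rank dm w') := heq
    have h1 : w ∈ insert w' (Dab rank dm w') := heq' ▸ mem_insert_self w (Dab rank dm w)
    rcases mem_insert.mp h1 with h | h
    · exact h
    · exact absurd (mem_Dab.mp h).1 (by rw [(hWndmem w hw).1]; simp)
  have hFprop : ∀ s ∈ F, T.IsNClique i s := by
    intro s hs
    obtain ⟨w, hw, rfl⟩ := mem_image.mp hs
    refine ⟨clique_insert_Dab hinj hadj w, ?_⟩
    rw [card_insert_of_notMem notMem_Dab_self, (hWndmem w hw).2]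
    omega
  have hFmax : ∀ s ∈ F, IsMaxCliqueOf T s := by
    intro s hs
    obtain ⟨w, hw, rfl⟩ := mem_image.mp hs
    exact maxclique_of hinj hadj (hWndmem w hw).1
  have hFmem : ∀ t, IsMaxCliqueOf T t → t.card = i → t ∈ F := by
    intro t htmax htcard
    obtain ⟨w, hdmw, rfl⟩ := maxclique_char hinj hadj hmin htmax
    rw [card_insert_of_notMem notMem_Dab_self] at htcard
    exact mem_image.mpr ⟨w, mem_filter.mpr ⟨mem_univ w, hdmw, by omega⟩, rfl⟩
  have hFsub : ∀ D' : Finset (Finset V), IsDominatingCliqueSet T i D' → F ⊆ D' := by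
    intro D' hD' s hsF
    have hcard : s.card = i := (hFprop s hsF).card_eq
    obtain ⟨t, htD', hts⟩ := hD'.2 s (hFmax s hsF) (le_of_eq hcard.symm)
    have : t = s := Finset.eq_of_subset_of_card_le hts
      (by rw [hcard, (hD'.1 t htD').card_eq])
    exact this ▸ htD'
  have hC0max : IsMaxCliqueOf T (insert w₀ (Dab rank dm w₀)) :=
    maxclique_of hinj hadj hw₀dm
  have hC0card : (insert w₀ (Dab rank dm w₀)).card = d := by
    rw [card_insert_of_notMem notMem_Dab_self, hDab0]
    omega
  have hdomNum : domNum T i = Wnd.card + (if i < d then 1 else 0) := by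
    by_cases hid : i < d
    · rw [if_pos hid]
      have hmem : i - 1 ∈ range D.card := mem_range.mpr (by omega)
      rw [← himg] at hmem
      obtain ⟨wd, hwdD, hwdN⟩ := mem_image.mp hmem
      have hdmwd : dm wd = true := (mem_filter.mp hwdD).2
      have hStclq : T.IsNClique i (insert wd (Dab rank dm wd)) := by
        refine ⟨clique_insert_Dab hinj hadj wd, ?_⟩
        rw [card_insert_of_notMem notMem_Dab_self, hwdN]
        omega
      have hStF : insert wd (Dab rank dm wd) ∉ F := by
        intro hStF
        obtain ⟨w, hw, heq⟩ := mem_image.mp hStF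
        have hdmw : dm w = false := (hWndmem w hw).1
        have hwSt : w ∈ insert wd (Dab rank dm wd) := heq ▸ mem_insert_self w _
        rcases mem_insert.mp hwSt with rfl | h
        · rw [hdmwd] at hdmw; exact absurd hdmw (by simp)
        · rw [(mem_Dab.mp h).1] at hdmw; exact absurd hdmw (by simp)
      have hdomSet : IsDominatingCliqueSet T i (insert (insert wd (Dab rank dm wd)) F) := by
        constructor
        · intro s hs
          rcases mem_insert.mp hs with rfl | hsF
          · exact hStclq
          · exact hFprop s hsF
        · intro t htmax hit
          obtain ⟨w, hdmw, rfl⟩ := maxclique_char hinj hadj hmin htmax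
          rcases eq_or_lt_of_le hit with heq | hlt
          · exact ⟨_, mem_insert_of_mem (hFmem _ htmax heq.symm), subset_rfl⟩
          · refine ⟨insert wd (Dab rank dm wd), mem_insert_self _ _, ?_⟩
            have hNwge : i ≤ (Dab rank dm w).card := by
              rw [card_insert_of_notMem notMem_Dab_self] at hlt
              omega
            have hrw : rank w < rank wd := by
              by_contra hc
              have := card_le_card
                (Dab_antitone (not_lt.mp hc) : Dab rank dm w ⊆ Dab rank dm wd)
              omega
            intro u hu
            rcases mem_insert.mp hu with rfl | h
            · exact mem_insert_of_mem (mem_Dab.mpr ⟨hdmwd, hrw⟩)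
            · exact mem_insert_of_mem (Dab_antitone hrw.le h)
      have hmemSet : Wnd.card + 1 ∈
          {k | ∃ Ds : Finset (Finset V), IsDominatingCliqueSet T i Ds ∧ Ds.card = k} :=
        ⟨insert (insert wd (Dab rank dm wd)) F, hdomSet,
          by rw [card_insert_of_notMem hStF, hFcard]⟩
      apply le_antisymm
      · exact Nat.sInf_le hmemSet
      · apply le_csInf ⟨_, hmemSet⟩
        rintro k ⟨D', hD', rfl⟩
        obtain ⟨s₀, hs₀D, hs₀sub⟩ := hD'.2 _ hC0max (by omega)
        have hs₀F : s₀ ∉ F := by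
          intro h
          have heqC : s₀ = insert w₀ (Dab rank dm w₀) :=
            (hFmax s₀ h).2 _ hC0max.1 hs₀sub
          have hcs := (hFprop s₀ h).card_eq
          rw [heqC, hC0card] at hcs
          omega
        calc Wnd.card + 1 = (insert s₀ F).card := by
              rw [card_insert_of_notMem hs₀F, hFcard]
          _ ≤ D'.card := card_le_card (insert_subset hs₀D (hFsub D' hD'))
    · rw [if_neg hid]
      have hdomF : IsDominatingCliqueSet T i F := by
        constructor
        · exact hFprop
        · intro t htmax hit
          have htle : t.card ≤ d := hdmax t.card t ⟨htmax.1, rfl⟩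
          have hteq : t.card = i := by omega
          exact ⟨t, hFmem t htmax hteq, subset_rfl⟩
      have hmemSet : Wnd.card ∈
          {k | ∃ Ds : Finset (Finset V), IsDominatingCliqueSet T i Ds ∧ Ds.card = k} :=
        ⟨F, hdomF, hFcard⟩
      apply le_antisymm
      · exact Nat.sInf_le hmemSet
      · apply le_csInf ⟨_, hmemSet⟩
        rintro k ⟨D', hD', rfl⟩
        rw [← hFcard]
        exact card_le_card (hFsub D' hD')
  rw [hbC, hdomNum, hsplit, hEcard]
end

section
/- Let T be a threshold graph that is not complete, with vertex connectivity κ. Then for every minimum vertex-cut Y of T (i.e., a vertex-cut with |Y| = κ), one has b_{κ+1} = W(T−Y), the number of connected components of T after deleting Y. -/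
open Finset

lemma thresholdOn_exists {V : Type*} [DecidableEq V] {G : SimpleGraph V} {s : Finset V}
    (h : IsThresholdOn G s) :
    ∃ (n : ℕ) (f : ℕ → V) (g : ℕ → Bool),
      0 < n ∧ g 0 = false ∧
      (∀ i j, i < j → j < n → f i ≠ f j) ∧
      s = (Finset.range n).image f ∧
      (∀ i j, i < j → j < n → (G.Adj (f i) (f j) ↔ g j = true)) := by
  induction h with
  | single v =>
      exact ⟨1, fun _ => v, fun _ => false, Nat.one_pos, rfl,
        fun i j hij hj => by omega,
        by simp, fun i j hij hj => by omega⟩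
  | isolated s v hv hs hiso ih =>
      obtain ⟨n, f, g, hn, hg0, hinj, hset, hadj⟩ := ih
      refine ⟨n + 1, Function.update f n v, Function.update g n false, by omega,
        by rw [Function.update_of_ne (by omega)]; exact hg0, ?_, ?_, ?_⟩
      · intro i j hij hj
        rcases Nat.lt_or_ge j n with hjn | hjn
        · rw [Function.update_of_ne (by omega), Function.update_of_ne (by omega)]
          exact hinj i j hij hjn
        · have hj' : j = n := by omega
          subst hj'
          rw [Function.update_of_ne (by omega), Function.update_self]
          intro hfi
          exact hv (hset ▸ (hfi ▸ Finset.mem_image_of_mem f (Finset.mem_range.mpr hij)))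
      · ext w
        simp only [Finset.mem_insert, Finset.mem_image, Finset.mem_range, hset]
        constructor
        · rintro (rfl | ⟨i, hi, rfl⟩)
          · exact ⟨n, by omega, Function.update_self _ _ _⟩
          · exact ⟨i, by omega, by rw [Function.update_of_ne (by omega)]⟩
        · rintro ⟨i, hi, rfl⟩
          rcases Nat.lt_or_ge i n with hin | hin
          · exact Or.inr ⟨i, hin, by rw [Function.update_of_ne (by omega)]⟩
          · have : i = n := by omega
            subst this
            exact Or.inl (Function.update_self _ _ _)
      · intro i j hij hj
        rcases Nat.lt_or_ge j n with hjn | hjn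
        · rw [Function.update_of_ne (show i ≠ n by omega), Function.update_of_ne (show j ≠ n by omega),
            Function.update_of_ne (show j ≠ n by omega)]
          exact hadj i j hij hjn
        · have hj' : j = n := by omega
          rw [hj', Function.update_of_ne (show i ≠ n by omega), Function.update_self,
            Function.update_self]
          have hfi : f i ∈ s := hset ▸ Finset.mem_image_of_mem f (Finset.mem_range.mpr (by omega : i < n))
          simp only [Bool.false_eq_true, iff_false]
          intro had
          exact hiso (f i) hfi had.symm
  | dominating s v hv hs hdom ih =>
      obtain ⟨n, f, g, hn, hg0, hinj, hset, hadj⟩ := ih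
      refine ⟨n + 1, Function.update f n v, Function.update g n true, by omega,
        by rw [Function.update_of_ne (by omega)]; exact hg0, ?_, ?_, ?_⟩
      · intro i j hij hj
        rcases Nat.lt_or_ge j n with hjn | hjn
        · rw [Function.update_of_ne (by omega), Function.update_of_ne (by omega)]
          exact hinj i j hij hjn
        · have hj' : j = n := by omega
          subst hj'
          rw [Function.update_of_ne (by omega), Function.update_self]
          intro hfi
          exact hv (hset ▸ (hfi ▸ Finset.mem_image_of_mem f (Finset.mem_range.mpr hij)))
      · ext w
        simp only [Finset.mem_insert, Finset.mem_image, Finset.mem_range, hset]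
        constructor
        · rintro (rfl | ⟨i, hi, rfl⟩)
          · exact ⟨n, by omega, Function.update_self _ _ _⟩
          · exact ⟨i, by omega, by rw [Function.update_of_ne (by omega)]⟩
        · rintro ⟨i, hi, rfl⟩
          rcases Nat.lt_or_ge i n with hin | hin
          · exact Or.inr ⟨i, hin, by rw [Function.update_of_ne (by omega)]⟩
          · have : i = n := by omega
            subst this
            exact Or.inl (Function.update_self _ _ _)
      · intro i j hij hj
        rcases Nat.lt_or_ge j n with hjn | hjn
        · rw [Function.update_of_ne (show i ≠ n by omega), Function.update_of_ne (show j ≠ n by omega),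
            Function.update_of_ne (show j ≠ n by omega)]
          exact hadj i j hij hjn
        · have hj' : j = n := by omega
          rw [hj', Function.update_of_ne (show i ≠ n by omega), Function.update_self,
            Function.update_self]
          have hfi : f i ∈ s := hset ▸ Finset.mem_image_of_mem f (Finset.mem_range.mpr (by omega : i < n))
          simp only [iff_true]
          exact (hdom (f i) hfi).symm

lemma reach_isolated {W : Type*} {H : SimpleGraph W} {v w : W} (h : ∀ u, ¬ H.Adj v u)
    (hr : H.Reachable v w) : v = w := by
  obtain ⟨p⟩ := hr
  cases p with
  | nil => rfl
  | cons h' _ => exact absurd h' (h _)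

lemma sum_powerset_pow_s8 (A : Finset ℕ) (x : ℤ) :
    ∑ Q ∈ A.powerset, x ^ Q.card = (x + 1) ^ A.card := by
  have := Finset.prod_add (fun _ : ℕ => x) (fun _ : ℕ => 1) A
  simp only [Finset.prod_const, one_pow, mul_one] at this
  rw [← this]

/-- For a non-complete threshold graph `T` with vertex connectivity `κ`, largest clique
size `d` and `b`-vector `b`, for every minimum vertex-cut `Y` of `T` one has
`b (κ + 1) = W(T - Y)`. -/
theorem stmt8 {V : Type} [Fintype V] [DecidableEq V] (T : SimpleGraph V)
    (hnc : T ≠ ⊤) (hth : IsThreshold T)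
    (d : ℕ) (hd : ∃ s : Finset V, T.IsNClique d s)
    (hdmax : ∀ (m : ℕ) (s : Finset V), T.IsNClique m s → m ≤ d)
    (b : ℕ → ℤ)
    (hb : ∀ x : ℤ, ∑ i ∈ Finset.Icc 1 d, b i * (x + 1) ^ (i - 1) =
      ∑ i ∈ Finset.Icc 1 d, (cliqueCount T i : ℤ) * x ^ (i - 1))
    (Y : Finset V) (hY : IsVertexCut T Y) (hYmin : Y.card = vertexConnectivity T) :
    b (vertexConnectivity T + 1) = (numComponents T Y : ℤ) := by
  obtain ⟨n, f, g, hn, hg0, hinj, huniv, hadj⟩ := thresholdOn_exists hth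
  have hsurj : ∀ v : V, ∃ p, p < n ∧ f p = v := by
    intro v
    have : v ∈ (Finset.range n).image f := huniv ▸ Finset.mem_univ v
    obtain ⟨p, hp, hfp⟩ := Finset.mem_image.mp this
    exact ⟨p, Finset.mem_range.mp hp, hfp⟩
  have hinj' : ∀ i j, i < n → j < n → f i = f j → i = j := by
    intro i j hi hj hf
    rcases Nat.lt_trichotomy i j with h | h | h
    · exact absurd hf (hinj i j h hj)
    · exact h
    · exact absurd hf.symm (hinj j i h hi)
  -- t : largest index with g = false
  set F0 : Finset ℕ := (Finset.range n).filter (fun q => g q = false) with hF0def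
  have hF0ne : F0.Nonempty := ⟨0, by simp [hF0def, hg0, hn]⟩
  set t : ℕ := F0.max' hF0ne with htdef
  have htmem : t ∈ F0 := F0.max'_mem hF0ne
  have htn : t < n := by
    have := (Finset.mem_filter.mp htmem).1; simpa using this
  have hgt : g t = false := (Finset.mem_filter.mp htmem).2
  have htmax : ∀ j, t < j → j < n → g j = true := by
    intro j hj hjn
    by_contra hgj
    have : j ∈ F0 := Finset.mem_filter.mpr ⟨Finset.mem_range.mpr hjn, by simpa using hgj⟩
    exact absurd (F0.le_max' j this) (by omega)
  -- T non-complete forces t ≥ 1 (and n ≥ 2)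
  have ht1 : 1 ≤ t := by
    by_contra ht0
    apply hnc
    ext v w
    simp only [SimpleGraph.top_adj]
    constructor
    · exact fun h => h.ne
    · intro hvw
      obtain ⟨p, hp, rfl⟩ := hsurj v
      obtain ⟨q, hq, rfl⟩ := hsurj w
      have hpq : p ≠ q := fun h => hvw (by rw [h])
      rcases Nat.lt_or_ge p q with h | h
      · exact (hadj p q h hq).mpr (htmax q (by omega) hq)
      · exact ((hadj q p (by omega) hp).mpr (htmax p (by omega) hp)).symm
  -- universal vertex set U
  set U : Finset V := (Finset.Ioo t n).image f with hUdef
  have hfU : ∀ p, p < n → (f p ∈ U ↔ t < p) := by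
    intro p hp
    constructor
    · intro hmem
      obtain ⟨q, hq, hfq⟩ := Finset.mem_image.mp hmem
      rw [Finset.mem_Ioo] at hq
      rw [hinj' q p hq.2 hp hfq] at hq; exact hq.1
    · intro hpt
      exact Finset.mem_image_of_mem f (Finset.mem_Ioo.mpr ⟨hpt, hp⟩)
  have hUcard : U.card = n - 1 - t := by
    have hio : Set.InjOn f ↑(Finset.Ioo t n) := by
      intro a ha b hb hab
      rw [Finset.mem_coe, Finset.mem_Ioo] at ha hb
      exact hinj' a b ha.2 hb.2 hab
    rw [hUdef, Finset.card_image_of_injOn hio, Nat.card_Ioo]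
    omega
  -- members of complement of U
  have hUc : ∀ v : V, v ∈ (↑(Uᶜ) : Set V) ↔ ∃ p, p ≤ t ∧ f p = v := by
    intro v
    obtain ⟨p, hp, rfl⟩ := hsurj v
    simp only [Finset.coe_compl, Set.mem_compl_iff, Finset.mem_coe]
    constructor
    · intro hv
      refine ⟨p, ?_, rfl⟩
      by_contra hpt
      exact hv ((hfU p hp).mpr (by omega))
    · rintro ⟨q, hq, hfq⟩
      intro hmem
      have := (hfU p hp).mp hmem
      have := hinj' q p (by omega) hp hfq
      omega
  have hmemc : ∀ p, p ≤ t → f p ∈ (↑(Uᶜ) : Set V) := fun p hp => (hUc _).mpr ⟨p, hp, rfl⟩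
  -- f t is isolated in T - U
  have hisoT : ∀ w : (↑(Uᶜ) : Set V), ¬ (T.induce (↑(Uᶜ) : Set V)).Adj ⟨f t, hmemc t le_rfl⟩ w := by
    rintro ⟨v, hv⟩ hadj'
    obtain ⟨r, hr, rfl⟩ := (hUc v).mp hv
    have hTadj : T.Adj (f t) (f r) := hadj'
    have hne : t ≠ r := by
      intro h; rw [h] at hTadj; exact T.irrefl hTadj
    rcases Nat.lt_or_ge t r with h | h
    · omega
    · have := (hadj r t (by omega) htn).mp hTadj.symm
      rw [hgt] at this; exact absurd this (by simp)
  -- U is a vertex cut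
  have hUcut : IsVertexCut T U := by
    intro hconn
    have hreach := hconn.preconnected ⟨f t, hmemc t le_rfl⟩ ⟨f 0, hmemc 0 (by omega)⟩
    have := reach_isolated hisoT hreach
    have : f t = f 0 := congrArg Subtype.val this
    exact hinj 0 t (by omega) htn this.symm
  -- every vertex cut contains U
  have hsubU : ∀ Z : Finset V, IsVertexCut T Z → U ⊆ Z := by
    intro Z hZ v hvU
    by_contra hvZ
    obtain ⟨p, hp, rfl⟩ := hsurj v
    have hpt : t < p := (hfU p hp).mp hvU
    have hvZ' : f p ∈ (↑(Zᶜ) : Set V) := by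
      simp only [Finset.coe_compl, Set.mem_compl_iff, Finset.mem_coe]; exact hvZ
    apply hZ
    have hhub : ∀ a : (↑(Zᶜ) : Set V), (T.induce (↑(Zᶜ) : Set V)).Reachable a ⟨f p, hvZ'⟩ := by
      rintro ⟨w, hw⟩
      obtain ⟨q, hq, rfl⟩ := hsurj w
      rcases eq_or_ne q p with h | h
      · subst h; exact SimpleGraph.Reachable.refl _
      · have hTadj : T.Adj (f q) (f p) := by
          rcases Nat.lt_or_ge q p with h2 | h2
          · exact (hadj q p h2 hp).mpr (htmax p hpt hp)
          · exact ((hadj p q (by omega) hq).mpr (htmax q (by omega) hq)).symm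
        exact SimpleGraph.Adj.reachable hTadj
    have : Nonempty (↑(Zᶜ) : Set V) := ⟨⟨f p, hvZ'⟩⟩
    exact ⟨fun a b => (hhub a).trans (hhub b).symm⟩
  -- vertex connectivity
  have hκ : vertexConnectivity T = n - 1 - t := by
    unfold vertexConnectivity
    apply le_antisymm
    · exact Nat.sInf_le ⟨U, hUcut, hUcard⟩
    · have hne2 : {k | ∃ Y : Finset V, IsVertexCut T Y ∧ Y.card = k}.Nonempty :=
        ⟨n - 1 - t, U, hUcut, hUcard⟩
      apply le_csInf hne2
      rintro k ⟨Z, hZ, rfl⟩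
      calc n - 1 - t = U.card := hUcard.symm
        _ ≤ Z.card := Finset.card_le_card (hsubU Z hZ)
  have hYU : Y = U := by
    have h1 : U ⊆ Y := hsubU Y hY
    have h2 : Y.card = U.card := by rw [hYmin, hκ, hUcard]
    exact (Finset.eq_of_subset_of_card_le h1 (le_of_eq h2)).symm
  -- u : largest index ≤ t with g = true, else 0
  set F1 : Finset ℕ := (Finset.range (t+1)).filter (fun q => g q = true) with hF1def
  set u : ℕ := if hF : F1.Nonempty then F1.max' hF else 0 with hudef
  have hut : u ≤ t := by
    rcases em F1.Nonempty with h | h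
    · have := F1.max'_mem h
      simp only [hudef, dif_pos h]
      have := (Finset.mem_filter.mp (F1.max'_mem h)).1
      simp only [Finset.mem_range] at this; omega
    · simp [hudef, dif_neg h]
  have humax : ∀ q, u < q → q ≤ t → g q = false := by
    intro q hq hqt
    by_contra hgq
    have hmem : q ∈ F1 := Finset.mem_filter.mpr ⟨Finset.mem_range.mpr (by omega), by simpa using hgq⟩
    have hne : F1.Nonempty := ⟨q, hmem⟩
    have := F1.le_max' q hmem
    rw [hudef] at hq
    simp only [dif_pos hne] at hq
    omega
  have hgu : u ≠ 0 → g u = true := by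
    intro hu0
    have hne : F1.Nonempty := by
      by_contra h
      rw [hudef] at hu0
      simp [dif_neg h] at hu0
    have heq : u = F1.max' hne := by rw [hudef, dif_pos hne]
    rw [heq]
    exact (Finset.mem_filter.mp (F1.max'_mem hne)).2
  -- isolated vertices in T - U
  have hiso2 : ∀ q (hq1 : u < q) (hq2 : q ≤ t) (w : (↑(Uᶜ) : Set V)),
      ¬ (T.induce (↑(Uᶜ) : Set V)).Adj ⟨f q, hmemc q hq2⟩ w := by
    rintro q hq1 hq2 ⟨v, hv⟩ hadj'
    obtain ⟨r, hr, rfl⟩ := (hUc v).mp hv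
    have hTadj : T.Adj (f q) (f r) := hadj'
    have hne : q ≠ r := fun h => T.irrefl (h ▸ hTadj)
    rcases Nat.lt_or_ge q r with h | h
    · have := (hadj q r h (by omega)).mp hTadj
      rw [humax r (by omega) hr] at this; exact absurd this (by simp)
    · have := (hadj r q (by omega) (by omega)).mp hTadj.symm
      rw [humax q hq1 hq2] at this; exact absurd this (by simp)
  -- number of components
  have hcomp : numComponents T U = t + 1 - u := by
    have key : Nat.card (↥(Finset.Icc u t)) =
        Nat.card (T.induce (↑(Uᶜ) : Set V)).ConnectedComponent := by
      apply Nat.card_eq_of_bijective (fun p =>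
        (T.induce (↑(Uᶜ) : Set V)).connectedComponentMk
          ⟨f p.1, hmemc p.1 (Finset.mem_Icc.mp p.2).2⟩)
      constructor
      · rintro ⟨p, hp⟩ ⟨q, hq⟩ heq
        rw [Finset.mem_Icc] at hp hq
        simp only [SimpleGraph.ConnectedComponent.eq] at heq
        apply Subtype.ext
        show p = q
        by_contra hne
        rcases Nat.lt_or_ge p q with h | h
        · have := reach_isolated (hiso2 q (by omega) hq.2) heq.symm
          have : f q = f p := congrArg Subtype.val this
          exact hinj p q h (by omega) this.symm
        · have := reach_isolated (hiso2 p (by omega) hp.2) heq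
          have : f p = f q := congrArg Subtype.val this
          exact hinj q p (by omega) (by omega) this.symm
      · intro c
        obtain ⟨⟨v, hv⟩, rfl⟩ := c.exists_rep
        obtain ⟨r, hr, rfl⟩ := (hUc v).mp hv
        rcases le_or_gt u r with h | h
        · exact ⟨⟨r, Finset.mem_Icc.mpr ⟨h, hr⟩⟩, rfl⟩
        · refine ⟨⟨u, Finset.mem_Icc.mpr ⟨le_rfl, hut⟩⟩, ?_⟩
          apply SimpleGraph.ConnectedComponent.sound
          have hTadj : T.Adj (f r) (f u) :=
            (hadj r u h (by omega)).mpr (hgu (by omega))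
          exact (SimpleGraph.Adj.reachable (by exact hTadj.symm :
            (T.induce (↑(Uᶜ) : Set V)).Adj ⟨f u, hmemc u hut⟩ ⟨f r, hv⟩))
    unfold numComponents
    rw [← key, Nat.card_eq_fintype_card, Fintype.card_coe, Nat.card_Icc]
  -- Dpos and d
  set Dpos : Finset ℕ := (Finset.range n).filter (fun q => g q = true) with hDdef
  have hDsub : Dpos ⊆ Finset.range n := Finset.filter_subset _ _
  have h0D : (0 : ℕ) ∉ Dpos := by
    simp only [hDdef, Finset.mem_filter]
    rintro ⟨-, h0⟩
    rw [hg0] at h0; exact absurd h0 (by simp)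
  have hDmem : ∀ q ∈ Dpos, q < n ∧ g q = true := by
    intro q hq
    have := Finset.mem_filter.mp hq
    exact ⟨Finset.mem_range.mp this.1, this.2⟩
  have hdD : d = Dpos.card + 1 := by
    have hsubr : insert 0 Dpos ⊆ Finset.range n := by
      intro q hq
      rcases Finset.mem_insert.mp hq with rfl | h
      · exact Finset.mem_range.mpr hn
      · exact hDsub h
    have hinjOn : Set.InjOn f ↑(insert 0 Dpos) := by
      intro a ha b hb hab
      exact hinj' a b (Finset.mem_range.mp (hsubr ha)) (Finset.mem_range.mp (hsubr hb)) hab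
    have hcliqueD : T.IsNClique (Dpos.card + 1) ((insert 0 Dpos).image f) := by
      constructor
      · intro v hv w hw hvw
        rw [Finset.mem_coe, Finset.mem_image] at hv hw
        obtain ⟨p, hp, rfl⟩ := hv
        obtain ⟨q, hq, rfl⟩ := hw
        have hpn := Finset.mem_range.mp (hsubr hp)
        have hqn := Finset.mem_range.mp (hsubr hq)
        have hpq : p ≠ q := fun h => hvw (by rw [h])
        rcases Nat.lt_or_ge p q with h | h
        · have hq' : q ∈ Dpos := by
            rcases Finset.mem_insert.mp hq with rfl | h2
            · exact absurd h (by omega)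
            · exact h2
          exact (hadj p q h hqn).mpr (hDmem q hq').2
        · have hp' : p ∈ Dpos := by
            rcases Finset.mem_insert.mp hp with rfl | h2
            · exact absurd h (by omega)
            · exact h2
          exact ((hadj q p (by omega) hpn).mpr (hDmem p hp').2).symm
      · rw [Finset.card_image_of_injOn hinjOn, Finset.card_insert_of_notMem h0D]
    have hge : Dpos.card + 1 ≤ d := hdmax _ _ hcliqueD
    have hle : d ≤ Dpos.card + 1 := by
      obtain ⟨S, hS⟩ := hd
      set P : Finset ℕ := (Finset.range n).filter (fun p => f p ∈ S) with hPdef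
      have hPsub : P ⊆ Finset.range n := Finset.filter_subset _ _
      have hPimg : P.image f = S := by
        ext v
        simp only [Finset.mem_image, hPdef, Finset.mem_filter, Finset.mem_range]
        constructor
        · rintro ⟨p, ⟨hp, hfp⟩, rfl⟩; exact hfp
        · intro hv
          obtain ⟨p, hp, rfl⟩ := hsurj v
          exact ⟨p, ⟨hp, hv⟩, rfl⟩
      have hPcard : P.card = d := by
        rw [← hS.card_eq, ← hPimg, Finset.card_image_of_injOn]
        intro a ha b hb hab
        exact hinj' a b (Finset.mem_range.mp (hPsub ha)) (Finset.mem_range.mp (hPsub hb)) hab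
      have hPne : P.Nonempty := by
        rw [← Finset.card_pos, hPcard]; omega
      have hPss : P ⊆ insert (P.min' hPne) Dpos := by
        intro p hp
        rcases eq_or_ne p (P.min' hPne) with h | h
        · exact h ▸ Finset.mem_insert_self _ _
        · have hlt : P.min' hPne < p := lt_of_le_of_ne (P.min'_le p hp) (Ne.symm h)
          have hpn : p < n := Finset.mem_range.mp (hPsub hp)
          have hmn : P.min' hPne ∈ P := P.min'_mem hPne
          have hne2 : f (P.min' hPne) ≠ f p := hinj _ p hlt hpn
          have hAdj : T.Adj (f (P.min' hPne)) (f p) :=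
            hS.isClique (Finset.mem_coe.mpr (Finset.mem_filter.mp hmn).2)
              (Finset.mem_coe.mpr (Finset.mem_filter.mp hp).2) hne2
          exact Finset.mem_insert_of_mem (Finset.mem_filter.mpr
            ⟨Finset.mem_range.mpr hpn, (hadj _ p hlt hpn).mp hAdj⟩)
      calc d = P.card := hPcard.symm
        _ ≤ (insert (P.min' hPne) Dpos).card := Finset.card_le_card hPss
        _ ≤ Dpos.card + 1 := Finset.card_insert_le _ _
    omega
  -- apf
  set apf : ℕ → ℕ := fun p => ((Finset.Ioo p n).filter (fun q => g q = true)).card with hapf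
  -- helper : image under f of a position-clique is a clique
  have hinjOnR : ∀ P : Finset ℕ, P ⊆ Finset.range n → Set.InjOn f ↑P := by
    intro P hP a ha b hb hab
    exact hinj' a b (Finset.mem_range.mp (hP ha)) (Finset.mem_range.mp (hP hb)) hab
  have hcliqueOf : ∀ P : Finset ℕ, P ⊆ Finset.range n →
      (∀ p ∈ P, ∀ q ∈ P, p < q → g q = true) → T.IsNClique P.card (P.image f) := by
    intro P hPsub hPcl
    constructor
    · intro v hv w hw hvw
      rw [Finset.mem_coe, Finset.mem_image] at hv hw
      obtain ⟨p, hp, rfl⟩ := hv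
      obtain ⟨q, hq, rfl⟩ := hw
      have hpn := Finset.mem_range.mp (hPsub hp)
      have hqn := Finset.mem_range.mp (hPsub hq)
      have : p ≠ q := fun h => hvw (by rw [h])
      rcases Nat.lt_or_ge p q with h | h
      · exact (hadj p q h hqn).mpr (hPcl p hp q hq h)
      · exact ((hadj q p (by omega) hpn).mpr (hPcl q hq p hp (by omega))).symm
    · exact Finset.card_image_of_injOn (hinjOnR P hPsub)
  have himgSub : ∀ P1 P2 : Finset ℕ, P1 ⊆ Finset.range n → P2 ⊆ Finset.range n →
      P1.image f ⊆ P2.image f → P1 ⊆ P2 := by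
    intro P1 P2 h1 h2 hsub p hp
    have : f p ∈ P2.image f := hsub (Finset.mem_image_of_mem f hp)
    obtain ⟨q, hq, hfq⟩ := Finset.mem_image.mp this
    rwa [hinj' q p (Finset.mem_range.mp (h2 hq)) (Finset.mem_range.mp (h1 hp)) hfq] at hq
  have himgInj : ∀ P1 P2 : Finset ℕ, P1 ⊆ Finset.range n → P2 ⊆ Finset.range n →
      P1.image f = P2.image f → P1 = P2 := fun P1 P2 h1 h2 heq =>
    Finset.Subset.antisymm (himgSub P1 P2 h1 h2 (le_of_eq heq))
      (himgSub P2 P1 h2 h1 (le_of_eq heq.symm))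
  -- clique count via positions
  have hck : ∀ k : ℕ, (cliqueCount T k) =
      ((Finset.range n).powerset.filter
        (fun P => (∀ p ∈ P, ∀ q ∈ P, p < q → g q = true) ∧ P.card = k)).card := by
    intro k
    set CLk := (Finset.range n).powerset.filter
        (fun P => (∀ p ∈ P, ∀ q ∈ P, p < q → g q = true) ∧ P.card = k) with hCLk
    have hset : {s : Finset V | T.IsNClique k s} = ↑(CLk.image (fun P => P.image f)) := by
      ext S
      simp only [Set.mem_setOf_eq, Finset.coe_image, Set.mem_image, Finset.mem_coe]
      constructor
      · intro hS
        have himg : ((Finset.range n).filter (fun p => f p ∈ S)).image f = S := by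
          ext v
          simp only [Finset.mem_image, Finset.mem_filter, Finset.mem_range]
          constructor
          · rintro ⟨p, ⟨_, h⟩, rfl⟩; exact h
          · intro hv
            obtain ⟨p, hp, rfl⟩ := hsurj v
            exact ⟨p, ⟨hp, hv⟩, rfl⟩
        have hcard : ((Finset.range n).filter (fun p => f p ∈ S)).card = k := by
          have h := Finset.card_image_of_injOn (hinjOnR _
            (Finset.filter_subset (fun p => f p ∈ S) (Finset.range n)))
          rw [himg, hS.card_eq] at h
          exact h.symm
        refine ⟨_, ?_, himg⟩
        rw [hCLk, Finset.mem_filter, Finset.mem_powerset]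
        refine ⟨Finset.filter_subset _ _, ?_, hcard⟩
        intro p hp q hq hpq
        rw [Finset.mem_filter, Finset.mem_range] at hp hq
        exact (hadj p q hpq hq.1).mp (hS.isClique hp.2 hq.2 (hinj p q hpq hq.1))
      · rintro ⟨P, hP, rfl⟩
        rw [hCLk, Finset.mem_filter, Finset.mem_powerset] at hP
        obtain ⟨hPsub, hPcl, hPcard⟩ := hP
        exact hPcard ▸ hcliqueOf P hPsub hPcl
    unfold cliqueCount
    rw [hset, Set.ncard_coe_finset, Finset.card_image_of_injOn]
    intro P1 hP1 P2 hP2 heq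
    rw [Finset.mem_coe, hCLk, Finset.mem_filter, Finset.mem_powerset] at hP1 hP2
    exact himgInj P1 P2 hP1.1 hP2.1 heq
  -- min of a finset of naturals
  have hmP : ∀ (P : Finset ℕ) (h : P.Nonempty), (if h' : P.Nonempty then P.min' h' else 0) = P.min' h :=
    fun P h => dif_pos h
  set CL := (Finset.range n).powerset.filter
      (fun P => (∀ p ∈ P, ∀ q ∈ P, p < q → g q = true) ∧ P.Nonempty) with hCL
  have hmaps : ∀ P ∈ CL, P.card ∈ Finset.Icc 1 d := by
    intro P hP
    rw [hCL, Finset.mem_filter, Finset.mem_powerset] at hP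
    obtain ⟨hPsub, hPcl, hPne⟩ := hP
    rw [Finset.mem_Icc]
    exact ⟨Finset.card_pos.mpr hPne, hdmax _ _ (hcliqueOf P hPsub hPcl)⟩
  -- generating function identity
  have hgen : ∀ x : ℤ, (∑ i ∈ Finset.Icc 1 d, (cliqueCount T i : ℤ) * x ^ (i - 1)) =
      ∑ p ∈ Finset.range n, (x + 1) ^ (apf p) := by
    intro x
    have step1 : ∀ i ∈ Finset.Icc 1 d, (cliqueCount T i : ℤ) * x ^ (i - 1) =
        ∑ P ∈ CL.filter (fun P => P.card = i), x ^ (P.card - 1) := by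
      intro i hi
      rw [Finset.mem_Icc] at hi
      have hfe : CL.filter (fun P => P.card = i) = (Finset.range n).powerset.filter
          (fun P => (∀ p ∈ P, ∀ q ∈ P, p < q → g q = true) ∧ P.card = i) := by
        ext P
        rw [Finset.mem_filter, hCL, Finset.mem_filter, Finset.mem_powerset,
          Finset.mem_filter, Finset.mem_powerset]
        constructor
        · rintro ⟨⟨hsub, hcl, hne⟩, hcard⟩; exact ⟨hsub, hcl, hcard⟩
        · rintro ⟨hsub, hcl, hcard⟩
          exact ⟨⟨hsub, hcl, Finset.card_pos.mp (by omega)⟩, hcard⟩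
      have hconst : ∑ P ∈ CL.filter (fun P => P.card = i), x ^ (P.card - 1) =
          ∑ _P ∈ CL.filter (fun P => P.card = i), x ^ (i - 1) := by
        apply Finset.sum_congr rfl
        intro P hP
        rw [(Finset.mem_filter.mp hP).2]
      rw [hconst, Finset.sum_const, nsmul_eq_mul, hfe, ← hck i]
    calc ∑ i ∈ Finset.Icc 1 d, (cliqueCount T i : ℤ) * x ^ (i - 1)
        = ∑ i ∈ Finset.Icc 1 d, ∑ P ∈ CL.filter (fun P => P.card = i), x ^ (P.card - 1) :=
          Finset.sum_congr rfl step1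
      _ = ∑ P ∈ CL, x ^ (P.card - 1) :=
          Finset.sum_fiberwise_of_maps_to hmaps _
      _ = ∑ z ∈ (Finset.range n).sigma
            (fun p => ((Finset.Ioo p n).filter (fun q => g q = true)).powerset),
            x ^ (z.2.card) := by
          apply Finset.sum_nbij'
            (i := fun P => (⟨(if h' : P.Nonempty then P.min' h' else 0), P.erase ((if h' : P.Nonempty then P.min' h' else 0))⟩ :
              (_ : ℕ) × Finset ℕ))
            (j := fun z => insert z.1 z.2)
          · intro P hP
            rw [hCL, Finset.mem_filter, Finset.mem_powerset] at hP
            obtain ⟨hPsub, hPcl, hPne⟩ := hP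
            rw [Finset.mem_sigma, hmP P hPne]
            have hmm := P.min'_mem hPne
            refine ⟨hPsub hmm, Finset.mem_powerset.mpr ?_⟩
            intro q hq
            rw [Finset.mem_erase] at hq
            have hlt : P.min' hPne < q := lt_of_le_of_ne (P.min'_le q hq.2) (Ne.symm hq.1)
            refine Finset.mem_filter.mpr ⟨Finset.mem_Ioo.mpr
              ⟨hlt, Finset.mem_range.mp (hPsub hq.2)⟩, hPcl _ hmm q hq.2 hlt⟩
          · rintro ⟨p, Q⟩ hz
            dsimp only
            simp only [Finset.mem_sigma, Finset.mem_powerset] at hz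
            obtain ⟨hp, hQ⟩ := hz
            have hQp : ∀ q ∈ Q, p < q ∧ q < n ∧ g q = true := by
              intro q hq
              have := Finset.mem_filter.mp (hQ hq)
              rw [Finset.mem_Ioo] at this
              exact ⟨this.1.1, this.1.2, this.2⟩
            show insert p Q ∈ CL
            rw [hCL, Finset.mem_filter, Finset.mem_powerset]
            refine ⟨?_, ?_, Finset.insert_nonempty _ _⟩
            · intro q hq
              rcases Finset.mem_insert.mp hq with rfl | h
              · exact hp
              · exact Finset.mem_range.mpr (hQp q h).2.1
            · intro a ha c hc hac
              rcases Finset.mem_insert.mp hc with rfl | h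
              · rcases Finset.mem_insert.mp ha with rfl | h2
                · omega
                · exact absurd hac (by have := (hQp a h2).1; omega)
              · exact (hQp c h).2.2
          · intro P hP
            rw [hCL, Finset.mem_filter, Finset.mem_powerset] at hP
            obtain ⟨hPsub, hPcl, hPne⟩ := hP
            simp only [hmP P hPne]
            exact Finset.insert_erase (P.min'_mem hPne)
          · rintro ⟨p, Q⟩ hz
            dsimp only
            simp only [Finset.mem_sigma, Finset.mem_powerset] at hz
            obtain ⟨hp, hQ⟩ := hz
            show (⟨(if h' : (insert p Q).Nonempty then (insert p Q).min' h' else 0),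
              (insert p Q).erase
                ((if h' : (insert p Q).Nonempty then (insert p Q).min' h' else 0))⟩ :
              (_ : ℕ) × Finset ℕ) = ⟨p, Q⟩
            have hpQ : p ∉ Q := by
              intro h
              have := Finset.mem_Ioo.mp (Finset.mem_filter.mp (hQ h)).1
              omega
            have hne : (insert p Q).Nonempty := Finset.insert_nonempty _ _
            have hmin : (if h' : (insert p Q).Nonempty then (insert p Q).min' h' else 0) = p := by
              rw [hmP _ hne]
              apply le_antisymm
              · exact Finset.min'_le _ p (Finset.mem_insert_self _ _)
              · have := Finset.min'_mem _ hne
                rcases Finset.mem_insert.mp this with h | h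
                · omega
                · have := (Finset.mem_Ioo.mp (Finset.mem_filter.mp (hQ h)).1).1
                  omega
            simp only [hmin, Finset.erase_insert hpQ]
          · intro P hP
            rw [hCL, Finset.mem_filter, Finset.mem_powerset] at hP
            obtain ⟨hPsub, hPcl, hPne⟩ := hP
            simp only [hmP P hPne]
            rw [Finset.card_erase_of_mem (P.min'_mem hPne)]
      _ = ∑ p ∈ Finset.range n,
            ∑ Q ∈ ((Finset.Ioo p n).filter (fun q => g q = true)).powerset, x ^ Q.card :=
          Finset.sum_sigma _ _ _
      _ = ∑ p ∈ Finset.range n, (x + 1) ^ (apf p) := by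
          apply Finset.sum_congr rfl
          intro p _
          rw [sum_powerset_pow_s8]
  -- κ + 1 lies in [1, d]
  have hκd : n - 1 - t + 1 ∈ Finset.Icc 1 d := by
    have hsub2 : Finset.Ioo t n ⊆ Dpos := by
      intro q hq
      rw [Finset.mem_Ioo] at hq
      exact Finset.mem_filter.mpr ⟨Finset.mem_range.mpr hq.2, htmax q hq.1 hq.2⟩
    have hcc := Finset.card_le_card hsub2
    rw [Nat.card_Ioo] at hcc
    rw [Finset.mem_Icc]
    omega
  -- the polynomial identity in y
  have hby : ∀ y : ℤ, ∑ i ∈ Finset.Icc 1 d, b i * y ^ (i - 1) =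
      ∑ p ∈ Finset.range n, y ^ (apf p) := by
    intro y
    have h := hb (y - 1)
    rw [hgen (y - 1)] at h
    have h2 : y - 1 + 1 = y := by ring
    rw [h2] at h
    exact h
  have hpoly : (∑ i ∈ Finset.Icc 1 d, Polynomial.C (b i) * Polynomial.X ^ (i - 1) :
      Polynomial ℤ) = ∑ p ∈ Finset.range n, Polynomial.X ^ (apf p) := by
    apply Polynomial.funext
    intro y
    simp only [Polynomial.eval_finset_sum, Polynomial.eval_mul, Polynomial.eval_C,
      Polynomial.eval_pow, Polynomial.eval_X]
    exact hby y
  -- extract coefficient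
  have hcoeff : b (n - 1 - t + 1) =
      (((Finset.range n).filter (fun p => apf p = n - 1 - t)).card : ℤ) := by
    have h1 := congrArg (fun q : Polynomial ℤ => q.coeff (n - 1 - t)) hpoly
    simp only [Polynomial.finset_sum_coeff, Polynomial.coeff_C_mul,
      Polynomial.coeff_X_pow] at h1
    have hL : ∑ i ∈ Finset.Icc 1 d, b i * (if n - 1 - t = i - 1 then (1:ℤ) else 0) =
        b (n - 1 - t + 1) := by
      rw [Finset.sum_eq_single (n - 1 - t + 1)]
      · rw [if_pos (by omega), mul_one]
      · intro i hi hne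
        rw [Finset.mem_Icc] at hi
        rw [if_neg (by omega), mul_zero]
      · intro h; exact absurd hκd h
    have hR : ∑ p ∈ Finset.range n, (if n - 1 - t = apf p then (1:ℤ) else 0) =
        (((Finset.range n).filter (fun p => apf p = n - 1 - t)).card : ℤ) := by
      have hcong : ∀ p ∈ Finset.range n, (if n - 1 - t = apf p then (1:ℤ) else 0) =
          (if apf p = n - 1 - t then (1:ℤ) else 0) := by
        intro p _
        by_cases h : apf p = n - 1 - t
        · rw [if_pos h.symm, if_pos h]
        · rw [if_neg (fun hh => h hh.symm), if_neg h]
      rw [Finset.sum_congr rfl hcong, Finset.sum_boole]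
    rw [hL, hR] at h1
    exact h1
  -- the fiber count
  have hfiber : ((Finset.range n).filter (fun p => apf p = n - 1 - t)) = Finset.Icc u t := by
    have ha1 : ∀ p, u ≤ p → p ≤ t → apf p = n - 1 - t := by
      intro p h1 h2
      have hfe : (Finset.Ioo p n).filter (fun q => g q = true) = Finset.Ioo t n := by
        ext q
        simp only [Finset.mem_filter, Finset.mem_Ioo]
        constructor
        · rintro ⟨⟨hpq, hqn⟩, hgq⟩
          refine ⟨?_, hqn⟩
          by_contra hqt
          rw [humax q (by omega) (by omega)] at hgq
          exact absurd hgq (by simp)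
        · rintro ⟨htq, hqn⟩
          exact ⟨⟨by omega, hqn⟩, htmax q htq hqn⟩
      simp only [hapf, hfe, Nat.card_Ioo]
      omega
    have ha2 : ∀ p, p < u → apf p ≠ n - 1 - t := by
      intro p hpu
      have hs1 : insert u (Finset.Ioo t n) ⊆ (Finset.Ioo p n).filter (fun q => g q = true) := by
        intro q hq
        rcases Finset.mem_insert.mp hq with rfl | h
        · exact Finset.mem_filter.mpr ⟨Finset.mem_Ioo.mpr ⟨hpu, by omega⟩, hgu (by omega)⟩
        · rw [Finset.mem_Ioo] at h
          exact Finset.mem_filter.mpr ⟨Finset.mem_Ioo.mpr ⟨by omega, h.2⟩, htmax q h.1 h.2⟩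
      have hs2 : u ∉ Finset.Ioo t n := by
        simp only [Finset.mem_Ioo, not_and]
        omega
      have hs3 := Finset.card_le_card hs1
      rw [Finset.card_insert_of_notMem hs2, Nat.card_Ioo] at hs3
      simp only [hapf]
      omega
    have ha3 : ∀ p, t < p → p < n → apf p ≠ n - 1 - t := by
      intro p h1 h2
      have hfe : (Finset.Ioo p n).filter (fun q => g q = true) = Finset.Ioo p n := by
        apply Finset.filter_true_of_mem
        intro q hq
        rw [Finset.mem_Ioo] at hq
        exact htmax q (by omega) hq.2
      simp only [hapf, hfe, Nat.card_Ioo]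
      omega
    ext p
    simp only [Finset.mem_filter, Finset.mem_range, Finset.mem_Icc]
    constructor
    · rintro ⟨hpn, hpa⟩
      constructor
      · by_contra h
        exact ha2 p (by omega) hpa
      · by_contra h
        exact ha3 p (by omega) hpn hpa
    · rintro ⟨h1, h2⟩
      exact ⟨by omega, ha1 p h1 h2⟩
  rw [hκ, hYU, hcomp, hcoeff, hfiber, Nat.card_Icc]
end

section
/- Let T be a threshold graph that is not complete, with vertex connectivity κ and largest clique size d. Then for every i with κ+1 ≤ i ≤ d−1, one has b_{i+1} < Σ_{Y ⊆ V(T), |Y| = i} (W(T−Y) − 1), where the sum ranges over all subsets Y of V(T) of cardinality i. -/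
open Finset

/-!
Record a construction sequence of `T` by the time at which each vertex was added and the set
of vertices that were added as dominating ones, and let `A(w)` be the set of dominating vertices
added after `w`. Every clique is a vertex `w` together with a subset of `A(w)`, so
`∑ cₘ xᵐ⁻¹ = ∑_w (1 + x) ^ |A(w)|` and `b_{i+1}` is the number of vertices `w` with `|A(w)| = i`.
All of these but at most one are non-dominating and not the first vertex, and such a vertex `v`
is an isolated vertex of `T - A(v)` other than its first vertex.

Call a vertex of `T - Y` late-isolated if it is isolated and not the first vertex of `T - Y`; the
late-isolated vertices and the first vertex lie in distinct components, so there are at most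
`W(T - Y) - 1` of them. Let `z` be the last non-dominating vertex. The `|A(z)|` vertices added
after `z` are adjacent to all others, so `|A(z)| ≤ κ < i`, and `z` is late-isolated in
`T - (A(z) ∪ B)` for at least two `i`-sets obtained by choosing `B` among the vertices added
before `z`. Double counting the pairs (`Y`, late-isolated vertex of `T - Y`) gives
`∑_Y (W(T - Y) - 1) ≥ b_{i+1} + 1`.
-/

theorem Nat.two_le_choose {n k : ℕ} (hk : 0 < k) (hkn : k < n) : 2 ≤ n.choose k := by
  obtain ⟨n, rfl⟩ := Nat.exists_eq_add_one.2 (hk.trans hkn)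
  obtain ⟨k, rfl⟩ := Nat.exists_eq_add_one.2 hk
  have := Nat.choose_pos (n := n) (k := k) (by omega)
  have := Nat.choose_pos (n := n) (k := k + 1) (by omega)
  rw [Nat.choose_succ_succ']
  omega

open Polynomial in
theorem coeff_eq_card_of_forall_eval {ι : Type*} [Fintype ι] {d : ℕ} {b : ℕ → ℤ} {f : ι → ℕ}
    (h : ∀ y : ℤ, ∑ m ∈ Icc 1 d, b m * y ^ (m - 1) = ∑ j, y ^ f j) {i : ℕ} (hi : i < d) :
    b (i + 1) = #{j | f j = i} := by
  have hpoly : ∑ m ∈ Icc 1 d, C (b m) * X ^ (m - 1) = ∑ j, (X : ℤ[X]) ^ f j :=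
    Polynomial.funext fun y => by simpa [eval_finsetSum] using h y
  have := congrArg (coeff · i) hpoly
  simp only [finsetSum_coeff, coeff_C_mul_X_pow, coeff_X_pow] at this
  rw [sum_eq_single (i + 1) (fun m hm hne => if_neg (by have := (mem_Icc.1 hm).1; omega))
    (fun hi' => absurd (mem_Icc.2 ⟨by omega, hi⟩) hi')] at this
  simpa [sum_boole, eq_comm] using this

namespace SimpleGraph

variable {V : Type*}

theorem exists_ne_not_adj_of_ne_top {G : SimpleGraph V} (h : G ≠ ⊤) :
    ∃ u v, u ≠ v ∧ ¬ G.Adj u v := by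
  contrapose! h
  ext u v
  exact ⟨Adj.ne, h u v⟩

variable [Fintype V] {G : SimpleGraph V}

theorem card_lt_of_isNClique_of_ne_top (h : G ≠ ⊤) {d : ℕ} {s : Finset V}
    (hs : G.IsNClique d s) : d < Fintype.card V := by
  refine lt_of_le_of_ne (hs.card_eq ▸ card_le_univ s) fun hd => h ?_
  rw [← isClique_univ, ← coe_univ, ← eq_univ_of_card s (hs.card_eq.trans hd)]
  exact hs.isClique

variable [DecidableEq V]

theorem eq_of_reachable_induce_compl {Y : Finset V} {v x : (↑(Yᶜ) : Set V)}
    (hv : ∀ u, G.Adj v u → u ∈ Y) (h : (G.induce (↑(Yᶜ) : Set V)).Reachable v x) : x = v := by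
  obtain ⟨_ | @⟨_, w, _, hadj, _⟩⟩ := h
  · rfl
  · exact absurd (hv w hadj) (by simpa using w.2)

theorem isVertexCut_compl_pair {u v : V} (huv : u ≠ v) (h : ¬ G.Adj u v) :
    IsVertexCut G {u, v}ᶜ := fun hconn => by
  have hu : u ∈ (↑(({u, v} : Finset V)ᶜᶜ) : Set V) := by simp
  have hv : v ∈ (↑(({u, v} : Finset V)ᶜᶜ) : Set V) := by simp
  refine huv (congrArg Subtype.val
    (eq_of_reachable_induce_compl (fun w hw => ?_) (hconn.preconnected ⟨u, hu⟩ ⟨v, hv⟩))).symm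
  simp only [mem_compl, mem_insert, mem_singleton, not_or]
  exact ⟨hw.ne.symm, by rintro rfl; exact h hw⟩

theorem not_isVertexCut_of_forall_adj {Y : Finset V} {u : V} (hu : u ∉ Y)
    (hadj : ∀ w ≠ u, G.Adj u w) : ¬ IsVertexCut G Y := by
  have hu' : u ∈ (↑(Yᶜ) : Set V) := by simpa using hu
  have hreach : ∀ x, (G.induce (↑(Yᶜ) : Set V)).Reachable x ⟨u, hu'⟩ := fun x => by
    by_cases hx : x.1 = u
    · exact (Subtype.ext hx : x = ⟨u, hu'⟩) ▸ .refl _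
    · exact Adj.reachable (by simpa using (hadj x.1 hx).symm)
  exact not_not.2 (connected_iff _ |>.2 ⟨fun x y => (hreach x).trans (hreach y).symm, ⟨⟨u, hu'⟩⟩⟩)

theorem le_vertexConnectivity (h : G ≠ ⊤) {k : ℕ} (hk : ∀ Y, IsVertexCut G Y → k ≤ #Y) :
    k ≤ vertexConnectivity G := by
  obtain ⟨u, v, huv, hnadj⟩ := exists_ne_not_adj_of_ne_top h
  exact le_csInf ⟨_, _, isVertexCut_compl_pair huv hnadj, rfl⟩ fun _ ⟨Y, hY, hcard⟩ =>
    hcard ▸ hk Y hY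

theorem card_add_one_le_numComponents {Y S : Finset V} {u₀ : V}
    (hS : ∀ v ∈ S, v ∉ Y ∧ ∀ u, G.Adj v u → u ∈ Y) (hu₀Y : u₀ ∉ Y) (hu₀S : u₀ ∉ S) :
    #S + 1 ≤ numComponents G Y := by
  have hmem : ∀ v ∈ insert u₀ S, v ∈ (↑(Yᶜ) : Set V) := by
    intro v hv
    rcases mem_insert.1 hv with rfl | hv
    · simpa using hu₀Y
    · simpa using (hS v hv).1
  let f : ↥(insert u₀ S) → (G.induce (↑(Yᶜ) : Set V)).ConnectedComponent :=
    fun v => (G.induce (↑(Yᶜ) : Set V)).connectedComponentMk ⟨v, hmem v v.2⟩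
  have isolated : ∀ x y : ↥(insert u₀ S), x.1 ∈ S → f x = f y → x = y := fun x y hx hxy =>
    Subtype.ext (congrArg Subtype.val
      (eq_of_reachable_induce_compl (hS x hx).2 (ConnectedComponent.exact hxy))).symm
  have hf : Function.Injective f := by
    intro x y hxy
    rcases mem_insert.1 x.2 with hx | hx
    · rcases mem_insert.1 y.2 with hy | hy
      · exact Subtype.ext (hx.trans hy.symm)
      · exact (isolated y x hy hxy.symm).symm
    · exact isolated x y hx hxy
  calc #S + 1 = Nat.card ↥(insert u₀ S) := by
        rw [Nat.card_eq_finsetCard, card_insert_of_notMem hu₀S]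
    _ ≤ numComponents G Y := Nat.card_le_card_of_injective f hf

end SimpleGraph

structure ThresholdOrder {V : Type*} (G : SimpleGraph V) where
  time : V → ℕ
  dominating : Finset V
  time_injective : Function.Injective time
  adj_iff : ∀ {u v}, time v < time u → (G.Adj u v ↔ u ∈ dominating)

section

variable {V : Type*} [DecidableEq V] {G : SimpleGraph V}

theorem IsThresholdOn.exists_time_insert {s : Finset V} {v : V} (hv : v ∉ s) {time : V → ℕ}
    {D D' : Finset V} (hinj : Set.InjOn time s)
    (hadj : ∀ u ∈ s, ∀ w ∈ s, time w < time u → (G.Adj u w ↔ u ∈ D))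
    (hD : ∀ u ∈ s, u ∈ D' ↔ u ∈ D) (hv' : ∀ u ∈ s, G.Adj v u ↔ v ∈ D') :
    ∃ time' : V → ℕ, Set.InjOn time' ↑(insert v s) ∧
      ∀ u ∈ insert v s, ∀ w ∈ insert v s, time' w < time' u → (G.Adj u w ↔ u ∈ D') := by
  have hlt : ∀ x ∈ s, time x < s.sup time + 1 := fun x hx => Nat.lt_succ_of_le (le_sup hx)
  have hne : ∀ x ∈ s, x ≠ v := fun x hx h => hv (h ▸ hx)
  refine ⟨fun x => if x = v then s.sup time + 1 else time x, ?_, ?_⟩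
  · intro x hx y hy hxy
    rcases mem_insert.1 (mem_coe.1 hx) with rfl | hx' <;>
      rcases mem_insert.1 (mem_coe.1 hy) with rfl | hy'
    · rfl
    · simp only [if_pos, hne y hy', if_false] at hxy
      exact absurd hxy (hlt y hy').ne'
    · simp only [if_pos, hne x hx', if_false] at hxy
      exact absurd hxy (hlt x hx').ne
    · simp only [hne x hx', hne y hy', if_false] at hxy
      exact hinj hx' hy' hxy
  · intro u hu w hw hwu
    rcases mem_insert.1 hu with rfl | hu' <;> rcases mem_insert.1 hw with rfl | hw'
    · exact absurd hwu (lt_irrefl _)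
    · exact hv' w hw'
    · simp only [if_pos, hne u hu'] at hwu
      exact absurd hwu (hlt u hu').not_gt
    · simp only [hne u hu', hne w hw', if_false] at hwu
      rw [hD u hu']
      exact hadj u hu' w hw' hwu

theorem IsThresholdOn.exists_time {s : Finset V} (h : IsThresholdOn G s) :
    ∃ (time : V → ℕ) (D : Finset V), Set.InjOn time s ∧
      ∀ u ∈ s, ∀ v ∈ s, time v < time u → (G.Adj u v ↔ u ∈ D) := by
  induction h with
  | single v => exact ⟨fun _ => 0, ∅, by simp, by simp⟩
  | isolated s v hv _ hiso ih =>
    obtain ⟨time, D, hinj, hadj⟩ := ih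
    exact (IsThresholdOn.exists_time_insert (D' := D.erase v) hv hinj hadj
      (fun u hu => by simp [ne_of_mem_of_not_mem hu hv]) (fun u hu => by simp [hiso u hu])).imp
      fun _ h => ⟨_, h⟩
  | dominating s v hv _ hdom ih =>
    obtain ⟨time, D, hinj, hadj⟩ := ih
    exact (IsThresholdOn.exists_time_insert (D' := insert v D) hv hinj hadj
      (fun u hu => by simp [ne_of_mem_of_not_mem hu hv]) (fun u hu => by simp [hdom u hu])).imp
      fun _ h => ⟨_, h⟩

theorem IsThreshold.nonempty_thresholdOrder [Fintype V] (h : IsThreshold G) :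
    Nonempty (ThresholdOrder G) := by
  obtain ⟨time, D, hinj, hadj⟩ := h.exists_time
  exact ⟨⟨time, D, Set.injOn_univ.1 (by simpa using hinj),
    fun hlt => hadj _ (mem_univ _) _ (mem_univ _) hlt⟩⟩

end

namespace ThresholdOrder

variable {V : Type*} {G : SimpleGraph V} (o : ThresholdOrder G) {u v w z : V}

def domAfter (v : V) : Finset V := o.dominating.filter fun u => o.time v < o.time u

@[simp]
theorem mem_domAfter : u ∈ o.domAfter v ↔ u ∈ o.dominating ∧ o.time v < o.time u := mem_filter

theorem notMem_domAfter_self : v ∉ o.domAfter v := by simp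

theorem time_lt_or_gt (h : u ≠ v) : o.time u < o.time v ∨ o.time v < o.time u :=
  lt_or_gt_of_ne (o.time_injective.ne h)

theorem domAfter_anti (h : o.time v ≤ o.time w) : o.domAfter w ⊆ o.domAfter v := fun u hu => by
  rw [mem_domAfter] at hu ⊢
  exact ⟨hu.1, h.trans_lt hu.2⟩

theorem card_domAfter_lt (h : o.time v < o.time w) (hw : w ∈ o.dominating) :
    #(o.domAfter w) < #(o.domAfter v) :=
  card_lt_card <| (ssubset_iff_of_subset (o.domAfter_anti h.le)).2
    ⟨w, o.mem_domAfter.2 ⟨hw, h⟩, o.notMem_domAfter_self⟩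

theorem mem_domAfter_of_adj (hv : v ∉ o.dominating) (h : G.Adj v u) : u ∈ o.domAfter v := by
  rcases o.time_lt_or_gt h.ne.symm with hlt | hgt
  · exact absurd ((o.adj_iff hlt).1 h) hv
  · exact o.mem_domAfter.2 ⟨(o.adj_iff hgt).1 h.symm, hgt⟩

theorem isClique_of_forall_time_lt {s : Set V}
    (h : ∀ x ∈ s, ∀ y ∈ s, o.time x < o.time y → y ∈ o.dominating) : G.IsClique s := by
  intro x hx y hy hxy
  rcases o.time_lt_or_gt hxy with hlt | hgt
  · exact ((o.adj_iff hlt).2 (h x hx y hy hlt)).symm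
  · exact (o.adj_iff hgt).2 (h y hy x hx hgt)

theorem adj_of_time_lt (hz : ∀ u, o.time z < o.time u → u ∈ o.dominating)
    (hu : o.time z < o.time u) (hw : w ≠ u) : G.Adj u w := by
  rcases o.time_lt_or_gt hw with hlt | hgt
  · exact (o.adj_iff hlt).2 (hz u hu)
  · exact ((o.adj_iff hgt).2 (hz w (hu.trans hgt))).symm

section

variable [DecidableEq V]

theorem time_le_of_mem_insert {B : Finset V} (hB : B ⊆ o.domAfter w) (hv : v ∈ insert w B) :
    o.time w ≤ o.time v := by
  rcases mem_insert.1 hv with rfl | hv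
  · rfl
  · exact (o.mem_domAfter.1 (hB hv)).2.le

theorem isNClique_succ_iff {m : ℕ} {s : Finset V} :
    G.IsNClique (m + 1) s ↔ ∃ w B, B ⊆ o.domAfter w ∧ #B = m ∧ insert w B = s := by
  constructor
  · intro hs
    obtain ⟨w, hws, hmin⟩ := s.exists_min_image o.time (card_pos.1 (by rw [hs.card_eq]; omega))
    refine ⟨w, s.erase w, fun u hu => ?_, by rw [card_erase_of_mem hws, hs.card_eq]; rfl,
      insert_erase hws⟩
    obtain ⟨hne, hus⟩ := mem_erase.1 hu
    have hlt : o.time w < o.time u :=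
      lt_of_le_of_ne (hmin u hus) (o.time_injective.ne hne.symm)
    exact o.mem_domAfter.2 ⟨(o.adj_iff hlt).1 (hs.isClique hus hws hne), hlt⟩
  · rintro ⟨w, B, hB, rfl, rfl⟩
    refine ⟨o.isClique_of_forall_time_lt fun x hx y hy hxy => ?_,
      card_insert_of_notMem fun hw => o.notMem_domAfter_self (hB hw)⟩
    rcases mem_insert.1 hy with rfl | hy
    · exact absurd hxy (o.time_le_of_mem_insert hB hx).not_gt
    · exact (o.mem_domAfter.1 (hB hy)).1

theorem eq_of_insert_eq {w' : V} {B B' : Finset V} (hB : B ⊆ o.domAfter w)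
    (hB' : B' ⊆ o.domAfter w') (h : insert w B = insert w' B') : w = w' ∧ B = B' := by
  obtain rfl : w = w' := o.time_injective <| le_antisymm
    (o.time_le_of_mem_insert hB (h ▸ mem_insert_self w' B'))
    (o.time_le_of_mem_insert hB' (h.symm ▸ mem_insert_self w B))
  refine ⟨rfl, ?_⟩
  rw [← erase_insert fun hw => o.notMem_domAfter_self (hB hw), h,
    erase_insert fun hw => o.notMem_domAfter_self (hB' hw)]

end

variable [Fintype V]

def earlier (v : V) : Finset V := {u | o.time u < o.time v}

@[simp]
theorem mem_earlier : u ∈ o.earlier v ↔ o.time u < o.time v := by simp [earlier]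

variable [DecidableEq V]

theorem cliqueCount_succ (m : ℕ) :
    cliqueCount G (m + 1) = ∑ w, (#(o.domAfter w)).choose m := by
  have hcliques : {s | G.IsNClique (m + 1) s} =
      ↑((univ.sigma fun w => (o.domAfter w).powersetCard m).image fun p => insert p.1 p.2) := by
    ext s
    simp [o.isNClique_succ_iff, and_assoc]
  rw [cliqueCount, hcliques, Set.ncard_coe_finset, card_image_of_injOn, card_sigma]
  · simp [card_powersetCard]
  · rintro ⟨w, B⟩ hp ⟨w', B'⟩ hp' h
    simp only [coe_sigma, Set.mem_sigma_iff, coe_univ, Set.mem_univ, mem_coe,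
      mem_powersetCard, true_and] at hp hp'
    obtain ⟨rfl, rfl⟩ := o.eq_of_insert_eq hp.1 hp'.1 h
    rfl

theorem sum_cliqueCount_mul_pow {d : ℕ} (hd : ∀ w, #(o.domAfter w) < d) (x : ℤ) :
    ∑ m ∈ Icc 1 d, (cliqueCount G m : ℤ) * x ^ (m - 1) = ∑ w, (x + 1) ^ #(o.domAfter w) := by
  rw [← Ico_add_one_right_eq_Icc, sum_Ico_eq_sum_range]
  simp only [add_tsub_cancel_right, add_comm 1, o.cliqueCount_succ,
    Nat.cast_sum, sum_mul]
  rw [sum_comm]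
  refine sum_congr rfl fun w _ => ?_
  rw [add_pow, ← sum_subset (range_subset_range.2 (hd w))
    fun k _ hk => by rw [Nat.choose_eq_zero_of_lt (by simpa using hk)]; simp]
  exact sum_congr rfl fun k _ => by ring

theorem eq_card_domAfter_of_bVector {d : ℕ} (hd : ∀ w, #(o.domAfter w) < d) {b : ℕ → ℤ}
    (hb : ∀ x : ℤ, ∑ m ∈ Icc 1 d, b m * (x + 1) ^ (m - 1) =
      ∑ m ∈ Icc 1 d, (cliqueCount G m : ℤ) * x ^ (m - 1))
    {i : ℕ} (hi : i < d) : b (i + 1) = #{v | #(o.domAfter v) = i} :=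
  coeff_eq_card_of_forall_eval
    (fun y => by simpa [o.sum_cliqueCount_mul_pow hd] using hb (y - 1)) hi

theorem exists_last_notMem_dominating (h : G ≠ ⊤) :
    ∃ z ∉ o.dominating, ∀ u, o.time z < o.time u → u ∈ o.dominating := by
  obtain ⟨u, v, huv, hnadj⟩ := SimpleGraph.exists_ne_not_adj_of_ne_top h
  have hne : ({w | w ∉ o.dominating} : Finset V).Nonempty := by
    rcases o.time_lt_or_gt huv with hlt | hgt
    · exact ⟨v, by simpa using mt (o.adj_iff hlt).2 fun h => hnadj h.symm⟩
    · exact ⟨u, by simpa using mt (o.adj_iff hgt).2 hnadj⟩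
  obtain ⟨z, hz, hmax⟩ := exists_max_image _ o.time hne
  refine ⟨z, (mem_filter.1 hz).2, fun u hu => by_contra fun hud => ?_⟩
  exact (hmax u (mem_filter.2 ⟨mem_univ u, hud⟩)).not_gt hu

theorem card_domAfter_le_vertexConnectivity (h : G ≠ ⊤)
    (hz : ∀ u, o.time z < o.time u → u ∈ o.dominating) :
    #(o.domAfter z) ≤ vertexConnectivity G :=
  SimpleGraph.le_vertexConnectivity h fun _ hY => card_le_card fun _ hu => by_contra fun huY =>
    SimpleGraph.not_isVertexCut_of_forall_adj huY
      (fun _ hw => o.adj_of_time_lt hz (o.mem_domAfter.1 hu).2 hw) hY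

def IsLateIsolated (Y : Finset V) (v : V) : Prop :=
  v ∉ Y ∧ (∀ u, G.Adj v u → u ∈ Y) ∧ ∃ u ∉ Y, o.time u < o.time v

open Classical in
theorem card_isLateIsolated_lt_numComponents {Y : Finset V} (hY : Yᶜ.Nonempty) :
    #{v | o.IsLateIsolated Y v} < numComponents G Y := by
  obtain ⟨u₀, hu₀, hmin⟩ := Yᶜ.exists_min_image o.time hY
  refine SimpleGraph.card_add_one_le_numComponents (u₀ := u₀)
    (fun v hv => ?_) (mem_compl.1 hu₀) fun hu => ?_
  · obtain ⟨hvY, hadj, -⟩ := (mem_filter.1 hv).2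
    exact ⟨hvY, hadj⟩
  · obtain ⟨u, huY, hlt⟩ := (mem_filter.1 hu).2.2.2
    exact (hmin u (mem_compl.2 huY)).not_gt hlt

open Classical in
theorem choose_le_card_isLateIsolated (hv : v ∉ o.dominating) {i : ℕ}
    (hi : #(o.domAfter v) ≤ i) (hi' : i < #(o.domAfter v) + #(o.earlier v)) :
    (#(o.earlier v)).choose (i - #(o.domAfter v)) ≤
      #{Y ∈ powersetCard i univ | o.IsLateIsolated Y v} := by
  have hdisj : ∀ B ⊆ o.earlier v, Disjoint (o.domAfter v) B := fun B hB =>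
    disjoint_left.2 fun u hu huB =>
      (o.mem_domAfter.1 hu).2.not_gt ((o.mem_earlier.1 (hB huB)))
  rw [← card_powersetCard]
  refine card_le_card_of_injOn (o.domAfter v ∪ ·) (fun B hB => ?_) fun B hB B' hB' h => ?_
  · obtain ⟨hBsub, hBcard⟩ := mem_powersetCard.1 (mem_coe.1 hB)
    obtain ⟨u, hu, huB⟩ := exists_mem_notMem_of_card_lt_card (s := B) (t := o.earlier v)
      (by omega)
    refine mem_filter.2 ⟨mem_powersetCard.2 ⟨subset_univ _, ?_⟩, ?_, fun u hadj =>
      mem_union_left _ (o.mem_domAfter_of_adj hv hadj), u, ?_, o.mem_earlier.1 hu⟩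
    · rw [card_union_of_disjoint (hdisj B hBsub)]
      omega
    · exact notMem_union.2
        ⟨o.notMem_domAfter_self, fun h => lt_irrefl _ (o.mem_earlier.1 (hBsub h))⟩
    · exact notMem_union.2 ⟨fun h => (o.mem_domAfter.1 h).2.not_gt (o.mem_earlier.1 hu), huB⟩
  · dsimp only at h
    rw [← union_sdiff_cancel_left (hdisj B (mem_powersetCard.1 (mem_coe.1 hB)).1), h,
      union_sdiff_cancel_left (hdisj B' (mem_powersetCard.1 (mem_coe.1 hB')).1)]

theorem card_domAfter_eq_le_card_notMem_add_one (i : ℕ) :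
    #{v | #(o.domAfter v) = i} ≤
      #{v | #(o.domAfter v) = i ∧ v ∉ o.dominating ∧ (o.earlier v).Nonempty} + 1 := by
  set F : Finset V := {v | #(o.domAfter v) = i ∧ v ∉ o.dominating ∧ (o.earlier v).Nonempty}
  set E : Finset V := {v | #(o.domAfter v) = i ∧ ¬ (v ∉ o.dominating ∧ (o.earlier v).Nonempty)}
  have key : ∀ v ∈ E, ∀ w ∈ E, ¬ o.time v < o.time w := by
    intro v hv w hw hlt
    simp only [E, mem_filter, mem_univ, true_and, not_and] at hv hw
    have hwD : w ∈ o.dominating := by_contra fun h => (hw.2 h) ⟨v, o.mem_earlier.2 hlt⟩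
    exact (o.card_domAfter_lt hlt hwD).ne (hw.1.trans hv.1.symm)
  have hE : #E ≤ 1 := card_le_one.2 fun v hv w hw => by_contra fun hne => by
    rcases o.time_lt_or_gt hne with hlt | hgt
    · exact key v hv w hw hlt
    · exact key w hw v hv hgt
  calc _ ≤ #(F ∪ E) := card_le_card fun v hv => by
        by_cases h : v ∉ o.dominating ∧ (o.earlier v).Nonempty <;> simp_all [F, E]
    _ ≤ _ := (card_union_le _ _).trans (by omega)

open Classical in
theorem card_domAfter_eq_lt_sum_numComponents (hz : z ∉ o.dominating)
    (hlater : ∀ u, o.time z < o.time u → u ∈ o.dominating) {i : ℕ}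
    (hzi : #(o.domAfter z) < i) (hin : i + 2 ≤ Fintype.card V) :
    (#{v | #(o.domAfter v) = i} : ℤ) <
      ∑ Y ∈ powersetCard i univ, ((numComponents G Y : ℤ) - 1) := by
  set F : Finset V := {v | #(o.domAfter v) = i ∧ v ∉ o.dominating ∧ (o.earlier v).Nonempty}
  set c : V → ℕ := fun v => #{Y ∈ powersetCard i univ | o.IsLateIsolated Y v}
  have hF : ∀ v ∈ F, 1 ≤ c v := fun v hv => by
    obtain ⟨hvi, hv, hne⟩ := (mem_filter.1 hv).2
    simpa [c, hvi] using o.choose_le_card_isLateIsolated hv hvi.le (by have := hne.card_pos; omega)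
  have hcover : Fintype.card V ≤ #(o.domAfter z) + #(o.earlier z) + 1 := by
    have : univ ⊆ insert z (o.domAfter z ∪ o.earlier z) := fun u _ => by
      rcases eq_or_ne u z with rfl | hne
      · exact mem_insert_self _ _
      rcases o.time_lt_or_gt hne with hlt | hgt
      · simp [hlt]
      · simp [hgt, hlater u hgt]
    exact (card_le_card this).trans ((card_insert_le _ _).trans (by grw [card_union_le]))
  have hcz : 2 ≤ c z := (Nat.two_le_choose (by omega) (by omega)).trans
    (o.choose_le_card_isLateIsolated hz hzi.le (by omega))
  have hzF : z ∉ F := fun h => (mem_filter.1 h).2.1.not_lt hzi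
  have hcount : #F + 2 ≤ ∑ v, c v := calc
    #F + 2 ≤ ∑ v ∈ insert z F, c v := by
      rw [sum_insert hzF, card_eq_sum_ones, add_comm]
      exact add_le_add hcz (sum_le_sum hF)
    _ ≤ ∑ v, c v := sum_le_sum_of_subset (subset_univ _)
  have hdouble : ∑ v, c v = ∑ Y ∈ powersetCard i univ, #{v | o.IsLateIsolated Y v} :=
    (sum_card_bipartiteAbove_eq_sum_card_bipartiteBelow o.IsLateIsolated).symm
  have hW : ∀ Y ∈ powersetCard i univ,
      (#{v | o.IsLateIsolated Y v} : ℤ) ≤ numComponents G Y - 1 := fun Y hY => by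
    have hYc : Yᶜ.Nonempty := card_pos.1 (by rw [card_compl, mem_powersetCard_univ.1 hY]; omega)
    have := o.card_isLateIsolated_lt_numComponents hYc
    omega
  calc (#{v | #(o.domAfter v) = i} : ℤ) ≤ #F + 1 := by
        exact_mod_cast o.card_domAfter_eq_le_card_notMem_add_one i
    _ < ∑ Y ∈ powersetCard i univ, (#{v | o.IsLateIsolated Y v} : ℤ) := by
      rw [← Nat.cast_sum, ← hdouble]
      omega
    _ ≤ _ := sum_le_sum hW

end ThresholdOrder

/-- For a non-complete threshold graph `T` with vertex connectivity `κ`, largest clique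
size `d` and `b`-vector `b`, for every `κ + 1 ≤ i ≤ d - 1` one has
`b (i+1) < Σ_{|Y| = i} (W(T-Y) - 1)`. -/
theorem stmt9 {V : Type} [Fintype V] [DecidableEq V] (T : SimpleGraph V)
    (hnc : T ≠ ⊤) (hth : IsThreshold T)
    (d : ℕ) (hd : ∃ s : Finset V, T.IsNClique d s)
    (hdmax : ∀ (m : ℕ) (s : Finset V), T.IsNClique m s → m ≤ d)
    (b : ℕ → ℤ)
    (hb : ∀ x : ℤ, ∑ i ∈ Finset.Icc 1 d, b i * (x + 1) ^ (i - 1) =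
      ∑ i ∈ Finset.Icc 1 d, (cliqueCount T i : ℤ) * x ^ (i - 1))
    (i : ℕ) (hi1 : vertexConnectivity T + 1 ≤ i) (hi2 : i ≤ d - 1) :
    b (i + 1) < ∑ Y ∈ Finset.powersetCard i (Finset.univ : Finset V),
      ((numComponents T Y : ℤ) - 1) := by
  obtain ⟨o⟩ := hth.nonempty_thresholdOrder
  obtain ⟨z, hz, hlater⟩ := o.exists_last_notMem_dominating hnc
  obtain ⟨s, hs⟩ := hd
  have hdn := SimpleGraph.card_lt_of_isNClique_of_ne_top hnc hs
  have hκ := o.card_domAfter_le_vertexConnectivity hnc hlater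
  have hcliques : ∀ w, #(o.domAfter w) < d := fun w =>
    hdmax _ _ (o.isNClique_succ_iff.2 ⟨w, _, subset_rfl, rfl, rfl⟩)
  rw [o.eq_card_domAfter_of_bVector hcliques hb (by omega)]
  exact o.card_domAfter_eq_lt_sum_numComponents hz hlater (by omega) (by omega)
end

section
/- Let G be a finite simple chordal graph that is not complete. Then there exists a threshold graph T on the same vertex set as G such that, for every i ≥ 1, the number of cliques of T with exactly i vertices equals the number of cliques of G with exactly i vertices; in particular G and T have the same clique vector and the same b-vector. -/
open Finset

/-!
A chordal graph has a perfect elimination ordering. In a chordal graph a minimal separator of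
two vertices is a clique, since two non-adjacent vertices of it, joined by shortest paths through
the two sides, would close an induced cycle of length at least four; Dirac's induction then gives
a simplicial vertex in every induced subgraph.
If the vertices are deleted in such an order and `v` has `d_v` neighbours among the vertices
still present, these neighbours form a clique, so `v` is the first deleted vertex of exactly
`C(d_v, i - 1)` cliques of size `i`, and `c_i(G) = ∑_v C(d_v, i - 1)`. With each value the
multiset of the `d_v` contains all smaller ones: the neighbourhood of `v` is a `d_v`-clique of
the remaining graph, so by the same formula some later vertex `w` has `d_w ≥ d_v - 1`.
Conversely every multiset of this kind is realised by a threshold graph: adding an isolated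
vertex appends a `0` to the multiset, adding a dominating vertex appends a `0` and raises all
other entries by one.
-/

open SimpleGraph

section

variable {V : Type*}

/-! ### Induced walks and cycles -/

namespace SimpleGraph

structure IsWalkVia (G : SimpleGraph V) (A : Set V) (x y : V) (r : ℕ) (p : ℕ → V) : Prop where
  start : p 0 = x
  finish : p r = y
  adj : ∀ i < r, G.Adj (p i) (p (i + 1))
  mem : ∀ i, 0 < i → i < r → p i ∈ A

variable {G : SimpleGraph V} {A : Set V} {x y : V} {r : ℕ} {p : ℕ → V}

lemma IsWalkVia.shortcut (h : G.IsWalkVia A x y r p) {i j : ℕ} (hij : i < j) (hj : j ≤ r)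
    (hadj : G.Adj (p i) (p j)) :
    G.IsWalkVia A x y (r - j + i + 1) (fun k => if k ≤ i then p k else p (k + j - i - 1)) where
  start := by simp [h.start]
  finish := by
    rw [if_neg (by omega), show r - j + i + 1 + j - i - 1 = r by omega, h.finish]
  adj k hk := by
    rcases lt_trichotomy k i with hki | rfl | hki
    · rw [if_pos hki.le, if_pos (show k + 1 ≤ i by omega)]
      exact h.adj k (by omega)
    · rw [if_pos le_rfl, if_neg (by omega), show k + 1 + j - k - 1 = j by omega]
      exact hadj
    · rw [if_neg (by omega), if_neg (by omega), show k + 1 + j - i - 1 = k + j - i - 1 + 1 by omega]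
      exact h.adj _ (by omega)
  mem k hk0 hkr := by
    by_cases hki : k ≤ i
    · rw [if_pos hki]
      exact h.mem k hk0 (by omega)
    · rw [if_neg hki]
      exact h.mem _ (by omega) (by omega)

/-- A shortest walk via `A` is induced. -/
lemma IsWalkVia.exists_induced (h : G.IsWalkVia A x y r p) (hxy : x ≠ y) :
    ∃ r p, G.IsWalkVia A x y r p ∧
      ∀ i j, i + 2 ≤ j → j ≤ r → p i ≠ p j ∧ ¬ G.Adj (p i) (p j) := by
  classical
  have hex : ∃ r p, G.IsWalkVia A x y r p := ⟨r, p, h⟩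
  obtain ⟨q, hq⟩ := Nat.find_spec hex
  have hchord : ∀ i j, i + 2 ≤ j → j ≤ Nat.find hex → ¬ G.Adj (q i) (q j) := by
    intro i j hij hj hadj
    have := Nat.find_min' hex ⟨_, hq.shortcut (by omega) hj hadj⟩
    omega
  refine ⟨_, q, hq, fun i j hij hj => ⟨fun heq => ?_, hchord i j hij hj⟩⟩
  rcases hj.lt_or_eq with hj | rfl
  · refine hchord i (j + 1) (by omega) hj ?_
    rw [heq]
    exact hq.adj j hj
  · rcases Nat.eq_zero_or_pos i with rfl | hi
    · exact hxy (hq.start.symm.trans (heq.trans hq.finish))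
    · refine hchord (i - 1) _ (by omega) le_rfl ?_
      rw [← heq]
      simpa [Nat.sub_add_cancel hi] using hq.adj (i - 1) (by omega)

lemma IsWalkVia.two_le (h : G.IsWalkVia A x y r p) (hxy : x ≠ y) (hnadj : ¬ G.Adj x y) :
    2 ≤ r := by
  by_contra! hr
  interval_cases r
  · exact hxy (h.start.symm.trans h.finish)
  · exact hnadj (h.start ▸ h.finish ▸ h.adj 0 one_pos)

end SimpleGraph

/-- The chordality hypothesis, for a closed walk `g 0, …, g n = g 0` indexed by `ℕ`. -/
lemma IsChordal.false_of_induced_cycle {G : SimpleGraph V} (hG : IsChordal G) {n : ℕ}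
    (hn : 4 ≤ n) {g : ℕ → V} (hadj : ∀ k < n, G.Adj (g k) (g (k + 1))) (hclosed : g n = g 0)
    (hind : ∀ a b, a + 2 ≤ b → b < n → (0 < a ∨ b + 1 < n) → g a ≠ g b ∧ ¬ G.Adj (g a) (g b)) :
    False := by
  have : NeZero n := ⟨by omega⟩
  have : Fact (1 < n) := ⟨by omega⟩
  have hval : ∀ i : ZMod n, (i + 1).val = (i.val + 1) % n := fun i => by
    rw [ZMod.val_add, ZMod.val_one]
  have hsucc : ∀ i : ZMod n, g (i + 1).val = g (i.val + 1) := fun i => by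
    rw [hval]
    have := ZMod.val_lt i
    rcases Nat.lt_or_ge (i.val + 1) n with h | h
    · rw [Nat.mod_eq_of_lt h]
    · rw [show i.val + 1 = n by omega, Nat.mod_self, hclosed]
  have hpair : ∀ i j : ZMod n, i.val < j.val → i + 1 ≠ j → j + 1 ≠ i →
      g i.val ≠ g j.val ∧ ¬ G.Adj (g i.val) (g j.val) := by
    intro i j hij hij1 hji1
    have hj := ZMod.val_lt j
    refine hind _ _ ?_ hj ?_
    · by_contra!
      exact hij1 (ZMod.val_injective n (by rw [hval, Nat.mod_eq_of_lt (by omega)]; omega))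
    · by_contra!
      refine hji1 (ZMod.val_injective n ?_)
      rw [hval, show j.val + 1 = n by omega, Nat.mod_self]
      omega
  have hne : ∀ i j : ZMod n, i.val < j.val → g i.val ≠ g j.val := by
    intro i j hij heq
    by_cases hij1 : i + 1 = j
    · simpa [← hsucc, hij1, heq] using hadj i.val (ZMod.val_lt i)
    by_cases hji1 : j + 1 = i
    · simpa [← hsucc, hji1, heq] using hadj j.val (ZMod.val_lt j)
    exact (hpair i j hij hij1 hji1).1 heq
  obtain ⟨i, j, hij, hij1, hji1, hchord⟩ := hG n hn (fun i => g i.val)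
    (fun i j h => by
      rcases lt_trichotomy i.val j.val with hlt | heq | hlt
      · exact absurd h (hne i j hlt)
      · exact ZMod.val_injective n heq
      · exact absurd h.symm (hne j i hlt))
    (fun i => by simpa only [hsucc] using hadj i.val (ZMod.val_lt i))
  rcases lt_trichotomy i.val j.val with hlt | heq | hlt
  · exact (hpair i j hlt hij1 hji1).2 hchord
  · exact hij (ZMod.val_injective n heq)
  · exact (hpair j i hlt hji1 hij1).2 hchord.symm

lemma IsChordal.false_of_isWalkVia {G : SimpleGraph V} (hG : IsChordal G) {A B : Set V}
    {x y : V} (hxy : x ≠ y) (hnadj : ¬ G.Adj x y)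
    (hAB : ∀ u ∈ A, ∀ w ∈ B, u ≠ w ∧ ¬ G.Adj u w) {r s : ℕ} {p q : ℕ → V}
    (hp : G.IsWalkVia A x y r p) (hq : G.IsWalkVia B x y s q) : False := by
  obtain ⟨r, p, hp, hpi⟩ := hp.exists_induced hxy
  obtain ⟨s, q, hq, hqi⟩ := hq.exists_induced hxy
  have hr := hp.two_le hxy hnadj
  have hs := hq.two_le hxy hnadj
  -- the cycle: along `p` from `x` to `y`, then back along `q`
  set g : ℕ → V := fun k => if k ≤ r then p k else q (r + s - k)
  have hgp : ∀ k ≤ r, g k = p k := fun k hk => if_pos hk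
  have hgq : ∀ k, r ≤ k → g k = q (r + s - k) := fun k hk => by
    rcases hk.lt_or_eq with hk | hk
    · exact if_neg (by omega)
    · rw [← hk, hgp r le_rfl, hp.finish, Nat.add_sub_cancel_left, hq.finish]
  refine hG.false_of_induced_cycle (n := r + s) (g := g) (by omega) (fun k hk => ?_) ?_ ?_
  · rcases Nat.lt_or_ge k r with hkr | hkr
    · rw [hgp k hkr.le, hgp (k + 1) hkr]
      exact hp.adj k hkr
    · rw [hgq k hkr, hgq (k + 1) (by omega), show r + s - k = r + s - (k + 1) + 1 by omega]
      exact (hq.adj _ (by omega)).symm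
  · rw [hgq _ (by omega), hgp 0 (by omega), Nat.sub_self, hq.start, hp.start]
  · intro a b hab hbn hab'
    by_cases hbr : b ≤ r
    · rw [hgp a (by omega), hgp b hbr]
      exact hpi a b hab hbr
    by_cases har : r ≤ a
    · rw [hgq a har, hgq b (by omega)]
      obtain ⟨hne, hnadj⟩ := hqi (r + s - b) (r + s - a) (by omega) (by omega)
      exact ⟨Ne.symm hne, fun h => hnadj h.symm⟩
    rcases Nat.eq_zero_or_pos a with rfl | ha
    · rw [hgq b (by omega), hgp 0 (by omega), hp.start, ← hq.start]
      exact hqi 0 (r + s - b) (by omega) (by omega)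
    · rw [hgp a (by omega), hgq b (by omega)]
      exact hAB _ (hp.mem a ha (by omega)) _ (hq.mem _ (by omega) (by omega))

/-! ### Separators and simplicial vertices -/

namespace SimpleGraph

def restrict (G : SimpleGraph V) (t : Finset V) : SimpleGraph V where
  Adj x y := G.Adj x y ∧ x ∈ t ∧ y ∈ t
  symm := ⟨fun _ _ h => ⟨h.1.symm, h.2.2, h.2.1⟩⟩
  loopless := ⟨fun _ h => G.irrefl h.1⟩

variable {G : SimpleGraph V} {t : Finset V}

@[simp]
lemma restrict_adj {x y : V} : (G.restrict t).Adj x y ↔ G.Adj x y ∧ x ∈ t ∧ y ∈ t := Iff.rfl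

lemma mem_of_reachable_restrict {u z : V} (h : (G.restrict t).Reachable u z) (hu : u ∈ t) :
    z ∈ t := by
  obtain ⟨w⟩ := h
  induction w with
  | nil => exact hu
  | cons h _ ih => exact ih (restrict_adj.1 h).2.2

lemma exists_adj_of_reachable_restrict_insert [DecidableEq V] {a b x : V}
    (h : (G.restrict (insert x t)).Reachable a b) (ha : a ∈ t)
    (hab : ¬ (G.restrict t).Reachable a b) : ∃ y, (G.restrict t).Reachable a y ∧ G.Adj x y := by
  obtain ⟨w⟩ := h
  induction w with
  | nil => exact absurd (Reachable.refl _) hab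
  | @cons a c b hac w ih =>
    obtain ⟨hac, -, hc⟩ := restrict_adj.1 hac
    by_cases hcx : c = x
    · exact ⟨a, Reachable.refl _, hcx ▸ hac.symm⟩
    have hct : c ∈ t := (mem_insert.1 hc).resolve_left hcx
    have hreach : (G.restrict t).Reachable a c := Adj.reachable ⟨hac, ha, hct⟩
    obtain ⟨y, hcy, hxy⟩ := ih hct fun h => hab (hreach.trans h)
    exact ⟨y, hreach.trans hcy, hxy⟩

lemma exists_isWalkVia_of_reachable_restrict {A : Set V} {u v x y : V}
    (huv : (G.restrict t).Reachable u v) (hA : ∀ z, (G.restrict t).Reachable u z → z ∈ A)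
    (hxu : G.Adj x u) (hvy : G.Adj v y) : ∃ r p, G.IsWalkVia A x y r p := by
  obtain ⟨w⟩ := huv
  refine ⟨w.length + 2,
    fun i => if i = 0 then x else if i = w.length + 2 then y else w.getVert (i - 1), ?_⟩
  refine ⟨by simp, by simp, fun i hi => ?_, fun i hi0 hi => ?_⟩
  · rcases Nat.eq_zero_or_pos i with rfl | hi0
    · simpa [w.getVert_zero] using hxu
    by_cases hlast : i = w.length + 1
    · subst hlast
      simpa [w.getVert_length] using hvy
    simp only [if_neg (show i ≠ 0 by omega), if_neg (show i ≠ w.length + 2 by omega),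
      if_neg (show i + 1 ≠ 0 by omega), if_neg (show i + 1 ≠ w.length + 2 by omega),
      show i + 1 - 1 = i - 1 + 1 by omega]
    exact (restrict_adj.1 (w.adj_getVert_succ (by omega))).1
  · simp only [if_neg (show i ≠ 0 by omega), if_neg (show i ≠ w.length + 2 by omega)]
    exact hA _ (w.take (i - 1)).reachable

lemma ne_and_not_adj_of_not_reachable_restrict {a b u w : V}
    (hab : ¬ (G.restrict t).Reachable a b) (ha : a ∈ t) (hb : b ∈ t)
    (hu : (G.restrict t).Reachable a u) (hw : (G.restrict t).Reachable b w) :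
    u ≠ w ∧ ¬ G.Adj u w := by
  refine ⟨fun h => hab (hu.trans (h ▸ hw).symm), fun huw => hab ?_⟩
  have huw' : (G.restrict t).Adj u w :=
    ⟨huw, mem_of_reachable_restrict hu ha, mem_of_reachable_restrict hw hb⟩
  exact hu.trans (huw'.reachable.trans hw.symm)

end SimpleGraph

variable [DecidableEq V]

namespace SimpleGraph

def IsSimplicialIn (G : SimpleGraph V) (s : Finset V) (v : V) : Prop :=
  G.IsClique (G.neighborSet v ∩ s)

variable {G : SimpleGraph V} {s S : Finset V} {a b : V}

lemma exists_minimal_separator (hab : a ≠ b) (hnadj : ¬ G.Adj a b) :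
    ∃ S ⊆ s \ {a, b}, ¬ (G.restrict (s \ S)).Reachable a b ∧
      ∀ x ∈ S, (G.restrict (s \ S.erase x)).Reachable a b := by
  have hsep : ¬ (G.restrict (s \ (s \ {a, b}))).Reachable a b := by
    rintro ⟨w⟩
    cases w with
    | nil => exact hab rfl
    | @cons _ c _ h _ =>
      obtain ⟨hac, -, hc⟩ := restrict_adj.1 h
      have hc : c = a ∨ c = b := by simp at hc; tauto
      rcases hc with rfl | rfl
      · exact G.irrefl hac
      · exact hnadj hac
  obtain ⟨S, hS, hmin⟩ := exists_minimal_le_of_wellFoundedLT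
    (fun S => ¬ (G.restrict (s \ S)).Reachable a b) _ hsep
  exact ⟨S, hS, hmin.prop, fun x hx => not_not.1 (hmin.not_prop_of_lt (erase_ssubset hx))⟩

lemma _root_.IsChordal.isClique_of_minimal_separator (hG : IsChordal G) (hS : S ⊆ s)
    (ha : a ∈ s \ S) (hb : b ∈ s \ S) (hsep : ¬ (G.restrict (s \ S)).Reachable a b)
    (hmin : ∀ x ∈ S, (G.restrict (s \ S.erase x)).Reachable a b) : G.IsClique (S : Set V) := by
  set R := G.restrict (s \ S)
  have hins : ∀ x ∈ S, s \ S.erase x = insert x (s \ S) := fun x hx => by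
    ext u
    by_cases hux : u = x <;> simp [hux, hS hx]
  have hnbrA : ∀ x ∈ S, ∃ y, R.Reachable a y ∧ G.Adj x y := fun x hx =>
    exists_adj_of_reachable_restrict_insert (hins x hx ▸ hmin x hx) ha hsep
  have hnbrB : ∀ x ∈ S, ∃ y, R.Reachable b y ∧ G.Adj x y := fun x hx =>
    exists_adj_of_reachable_restrict_insert (hins x hx ▸ hmin x hx).symm hb fun h => hsep h.symm
  intro x hx y hy hxy
  by_contra hnadj
  obtain ⟨xa, hxa, hxxa⟩ := hnbrA x hx
  obtain ⟨ya, hya, hyya⟩ := hnbrA y hy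
  obtain ⟨xb, hxb, hxxb⟩ := hnbrB x hx
  obtain ⟨yb, hyb, hyyb⟩ := hnbrB y hy
  obtain ⟨r, p, hp⟩ := exists_isWalkVia_of_reachable_restrict (A := {z | R.Reachable a z})
    (hxa.symm.trans hya) (fun _ => hxa.trans) hxxa hyya.symm
  obtain ⟨r', q, hq⟩ := exists_isWalkVia_of_reachable_restrict (A := {z | R.Reachable b z})
    (hxb.symm.trans hyb) (fun _ => hxb.trans) hxxb hyyb.symm
  exact hG.false_of_isWalkVia hxy hnadj
    (fun u hu w hw => ne_and_not_adj_of_not_reachable_restrict hsep ha hb hu hw) hp hq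

lemma exists_isSimplicialIn_of_separator
    (ih : ∀ t ⊂ s, ∀ K ⊂ t, G.IsClique (K : Set V) → ∃ v ∈ t \ K, G.IsSimplicialIn t v)
    (hS : S ⊆ s) (hSc : G.IsClique (S : Set V)) (ha : a ∈ s \ S) (hb : b ∈ s \ S)
    (hsep : ¬ (G.restrict (s \ S)).Reachable a b) :
    ∃ v, (G.restrict (s \ S)).Reachable a v ∧ G.IsSimplicialIn s v := by
  classical
  set R := G.restrict (s \ S)
  set t := {u ∈ s | u ∈ S ∨ R.Reachable a u}
  have hts : t ⊂ s := by
    refine ssubset_iff_of_subset (filter_subset _ _) |>.2 ⟨b, (mem_sdiff.1 hb).1, fun h => ?_⟩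
    exact ((mem_filter.1 h).2.resolve_left (mem_sdiff.1 hb).2) |> hsep
  have hSt : S ⊂ t := by
    refine ssubset_iff_of_subset (fun u hu => mem_filter.2 ⟨hS hu, .inl hu⟩) |>.2
      ⟨a, mem_filter.2 ⟨(mem_sdiff.1 ha).1, .inr (Reachable.refl a)⟩, (mem_sdiff.1 ha).2⟩
  obtain ⟨v, hv, hvt⟩ := ih t hts S hSt hSc
  obtain ⟨hvt', hvS⟩ := mem_sdiff.1 hv
  have hav : R.Reachable a v := ((mem_filter.1 hvt').2).resolve_left hvS
  have hsub : G.neighborSet v ∩ s ⊆ G.neighborSet v ∩ t := by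
    rintro u ⟨hvu, hu⟩
    refine ⟨hvu, mem_filter.2 ⟨hu, or_iff_not_imp_left.2 fun huS => hav.trans ?_⟩⟩
    exact Adj.reachable ⟨hvu, mem_of_reachable_restrict hav ha, mem_sdiff.2 ⟨hu, huS⟩⟩
  exact ⟨v, hav, IsClique.subset hsub hvt⟩

/-- Dirac's lemma, strengthened by the clique `K` so that the induction goes through. -/
theorem _root_.IsChordal.exists_isSimplicialIn_notMem (hG : IsChordal G) (s : Finset V) :
    ∀ K ⊂ s, G.IsClique (K : Set V) → ∃ v ∈ s \ K, G.IsSimplicialIn s v := by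
  induction s using Finset.strongInduction with
  | H s ih =>
  intro K hKs hK
  by_cases hs : G.IsClique (s : Set V)
  · obtain ⟨v, hvs, hvK⟩ := exists_of_ssubset hKs
    exact ⟨v, mem_sdiff.2 ⟨hvs, hvK⟩, hs.subset Set.inter_subset_right⟩
  obtain ⟨a, ha, b, hb, hab, hnadj⟩ : ∃ a ∈ s, ∃ b ∈ s, a ≠ b ∧ ¬ G.Adj a b := by
    simpa [isClique_iff, Set.Pairwise] using hs
  obtain ⟨S, hS, hsep, hmin⟩ := exists_minimal_separator (s := s) hab hnadj
  have hSs : S ⊆ s := hS.trans sdiff_subset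
  have haS : a ∈ s \ S := mem_sdiff.2 ⟨ha, fun h => by simpa using (mem_sdiff.1 (hS h)).2⟩
  have hbS : b ∈ s \ S := mem_sdiff.2 ⟨hb, fun h => by simpa using (mem_sdiff.1 (hS h)).2⟩
  have hSc := hG.isClique_of_minimal_separator hSs haS hbS hsep hmin
  obtain ⟨v, hav, hv⟩ := exists_isSimplicialIn_of_separator ih hSs hSc haS hbS hsep
  obtain ⟨w, hbw, hw⟩ :=
    exists_isSimplicialIn_of_separator ih hSs hSc hbS haS fun h => hsep h.symm
  have hvs := mem_of_reachable_restrict hav haS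
  have hws := mem_of_reachable_restrict hbw hbS
  obtain ⟨hvw, hnvw⟩ := ne_and_not_adj_of_not_reachable_restrict hsep haS hbS hav hbw
  by_cases hvK : v ∈ K
  · exact ⟨w, mem_sdiff.2 ⟨(mem_sdiff.1 hws).1, fun hwK => hnvw (hK hvK hwK hvw)⟩, hw⟩
  · exact ⟨v, mem_sdiff.2 ⟨(mem_sdiff.1 hvs).1, hvK⟩, hv⟩

lemma _root_.IsChordal.exists_isSimplicialIn (hG : IsChordal G) (hs : s.Nonempty) :
    ∃ v ∈ s, G.IsSimplicialIn s v := by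
  obtain ⟨v, hv, hsimp⟩ := hG.exists_isSimplicialIn_notMem s ∅ hs.empty_ssubset (by simp)
  exact ⟨v, (mem_sdiff.1 hv).1, hsimp⟩

end SimpleGraph

/-! ### Clique counts -/

def IsDownClosed (L : Multiset ℕ) : Prop :=
  ∀ d ∈ L, ∀ k ≤ d, k ∈ L

def chooseSum (L : Multiset ℕ) (i : ℕ) : ℕ :=
  (L.map (·.choose i)).sum

lemma chooseSum_zero (L : Multiset ℕ) : chooseSum L 0 = Multiset.card L := by
  simp [chooseSum]

lemma chooseSum_cons (d : ℕ) (L : Multiset ℕ) (i : ℕ) :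
    chooseSum (d ::ₘ L) i = d.choose i + chooseSum L i := by
  simp [chooseSum]

lemma chooseSum_map_succ (L : Multiset ℕ) (i : ℕ) :
    chooseSum (L.map Nat.succ) (i + 1) = chooseSum L (i + 1) + chooseSum L i := by
  simp only [chooseSum, Multiset.map_map, Function.comp_def, Nat.succ_eq_add_one,
    Nat.choose_succ_succ', Multiset.sum_map_add]
  ring

lemma exists_le_of_chooseSum_pos {L : Multiset ℕ} {i : ℕ} (h : 0 < chooseSum L i) :
    ∃ m ∈ L, i ≤ m := by
  by_contra! hlt
  refine h.ne' (Multiset.sum_eq_zero fun c hc => ?_)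
  obtain ⟨m, hm, rfl⟩ := Multiset.mem_map.1 hc
  exact Nat.choose_eq_zero_of_lt (hlt m hm)

lemma IsDownClosed.exists_eq_zero_cons {L : Multiset ℕ} (hL : IsDownClosed L) (hne : L ≠ 0) :
    ∃ L', IsDownClosed L' ∧ (L = 0 ::ₘ L' ∨ L = 0 ::ₘ L'.map Nat.succ) := by
  obtain ⟨d, hd⟩ := Multiset.exists_mem_of_ne_zero hne
  have hL0 : L = 0 ::ₘ L.erase 0 := (Multiset.cons_erase (hL d hd 0 d.zero_le)).symm
  have hmem : ∀ k ≠ 0, k ∈ L → k ∈ L.erase 0 := fun k hk h => (Multiset.mem_erase_of_ne hk).2 h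
  by_cases h0 : 0 ∈ L.erase 0
  · refine ⟨L.erase 0, fun e he k hk => ?_, .inl hL0⟩
    rcases eq_or_ne k 0 with rfl | hk0
    · exact h0
    · exact hmem k hk0 (hL e (Multiset.mem_of_mem_erase he) k hk)
  · have hpos : ∀ e ∈ L.erase 0, e ≠ 0 := fun e he h => h0 (h ▸ he)
    refine ⟨(L.erase 0).map Nat.pred, fun e he k hk => ?_, .inr ?_⟩
    · obtain ⟨e, he', rfl⟩ := Multiset.mem_map.1 he
      refine Multiset.mem_map.2 ⟨k + 1, hmem _ k.succ_ne_zero ?_, rfl⟩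
      have := hpos e he'
      exact hL e (Multiset.mem_of_mem_erase he') (k + 1) (by rw [Nat.pred_eq_sub_one] at hk; omega)
    · nth_rw 1 [hL0, ← Multiset.map_id (L.erase 0), Multiset.map_map]
      exact congrArg _ (Multiset.map_congr rfl fun e he => (Nat.succ_pred (hpos e he)).symm)

namespace SimpleGraph

open Classical in
noncomputable def cliqueFinsetOn (G : SimpleGraph V) (s : Finset V) (n : ℕ) : Finset (Finset V) :=
  {t ∈ s.powerset | G.IsNClique n t}

variable {G H : SimpleGraph V} {s t N : Finset V} {v : V} {n : ℕ}

@[simp]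
lemma mem_cliqueFinsetOn : t ∈ G.cliqueFinsetOn s n ↔ t ⊆ s ∧ G.IsNClique n t := by
  simp [cliqueFinsetOn]

lemma cliqueFinsetOn_congr (h : ∀ x ∈ s, ∀ y ∈ s, G.Adj x y ↔ H.Adj x y) :
    G.cliqueFinsetOn s n = H.cliqueFinsetOn s n := by
  ext t
  simp only [mem_cliqueFinsetOn, isNClique_iff, and_congr_right_iff, isClique_iff]
  refine fun hts => and_congr_left fun _ => ⟨fun hG x hx y hy hxy => ?_, fun hH x hx y hy hxy => ?_⟩
  · exact (h x (hts hx) y (hts hy)).1 (hG hx hy hxy)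
  · exact (h x (hts hx) y (hts hy)).2 (hH hx hy hxy)

lemma card_cliqueFinsetOn_zero : #(G.cliqueFinsetOn s 0) = 1 := by
  rw [card_eq_one]
  exact ⟨∅, by ext t; simp +contextual⟩

lemma card_cliqueFinsetOn_of_isClique (hs : G.IsClique (s : Set V)) :
    #(G.cliqueFinsetOn s n) = (#s).choose n := by
  rw [← card_powersetCard]
  congr 1
  ext t
  simp only [mem_cliqueFinsetOn, isNClique_iff, mem_powersetCard]
  exact ⟨fun h => ⟨h.1, h.2.2⟩, fun h => ⟨h.1, hs.subset (by simpa using h.1), h.2⟩⟩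

lemma card_cliqueFinsetOn_empty_succ : #(G.cliqueFinsetOn ∅ (n + 1)) = 0 := by
  simpa using card_cliqueFinsetOn_of_isClique (G := G) (s := ∅) (n := n + 1) (by simp)

lemma card_cliqueFinsetOn_insert (hv : v ∉ s) (hN : ∀ u, u ∈ N ↔ u ∈ s ∧ G.Adj v u) :
    #(G.cliqueFinsetOn (insert v s) (n + 1)) =
      #(G.cliqueFinsetOn s (n + 1)) + #(G.cliqueFinsetOn N n) := by
  have hNs : N ⊆ s := fun u hu => ((hN u).1 hu).1
  have hvN : v ∉ N := fun h => hv (hNs h)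
  have hsplit : G.cliqueFinsetOn (insert v s) (n + 1) =
      G.cliqueFinsetOn s (n + 1) ∪ (G.cliqueFinsetOn N n).image (insert v) := by
    ext t
    simp only [mem_union, mem_image, mem_cliqueFinsetOn]
    constructor
    · rintro ⟨hts, htc⟩
      by_cases hvt : v ∈ t
      · refine .inr ⟨t.erase v, ⟨fun u hu => ?_, htc.erase_of_mem hvt⟩, insert_erase hvt⟩
        obtain ⟨huv, hut⟩ := mem_erase.1 hu
        exact (hN u).2 ⟨(mem_insert.1 (hts hut)).resolve_left huv, htc.1 hvt hut (Ne.symm huv)⟩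
      · exact .inl ⟨(subset_insert_iff_of_notMem hvt).1 hts, htc⟩
    · rintro (⟨hts, htc⟩ | ⟨t', ⟨ht'N, ht'c⟩, rfl⟩)
      · exact ⟨hts.trans (subset_insert v s), htc⟩
      · refine ⟨insert_subset_insert v (ht'N.trans hNs), ?_⟩
        rw [isNClique_iff, card_insert_of_notMem (fun h => hvN (ht'N h)), ht'c.2, coe_insert]
        exact ⟨ht'c.1.insert fun u hu _ => ((hN u).1 (ht'N hu)).2, rfl⟩
  rw [hsplit, card_union_of_disjoint, card_image_of_injOn]
  · intro t ht t' ht' h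
    have hvt : v ∉ t := fun hv' => hvN ((mem_cliqueFinsetOn.1 ht).1 hv')
    have hvt' : v ∉ t' := fun hv' => hvN ((mem_cliqueFinsetOn.1 ht').1 hv')
    rw [← erase_insert hvt, ← erase_insert hvt']
    exact congrArg (·.erase v) h
  · refine Finset.disjoint_left.2 fun t ht ht' => ?_
    obtain ⟨t', -, rfl⟩ := mem_image.1 ht'
    exact hv ((mem_cliqueFinsetOn.1 ht).1 (mem_insert_self v t'))

/-- `L` is the multiset of the sizes of the neighbourhoods of the vertices of `s` at the time they
are deleted, simplicial vertex by simplicial vertex. -/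
theorem exists_card_cliqueFinsetOn_eq_chooseSum {G : SimpleGraph V}
    (hG : ∀ s : Finset V, s.Nonempty → ∃ v ∈ s, G.IsSimplicialIn s v) (s : Finset V) :
    ∃ L : Multiset ℕ, IsDownClosed L ∧ Multiset.card L = #s ∧
      ∀ i, #(G.cliqueFinsetOn s (i + 1)) = chooseSum L i := by
  classical
  induction s using Finset.strongInduction with
  | H s ih =>
  rcases s.eq_empty_or_nonempty with rfl | hs
  · exact ⟨0, by simp [IsDownClosed], by simp, fun i => by
      simp [card_cliqueFinsetOn_empty_succ, chooseSum]⟩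
  obtain ⟨v, hvs, hv⟩ := hG s hs
  obtain ⟨L, hL, hcard, hcnt⟩ := ih (s.erase v) (erase_ssubset hvs)
  set N := {u ∈ s.erase v | G.Adj v u}
  have hN : ∀ u, u ∈ N ↔ u ∈ s.erase v ∧ G.Adj v u := fun u => mem_filter
  have hNs : N ⊆ s.erase v := filter_subset _ _
  have hNc : G.IsClique (N : Set V) := by
    refine IsClique.subset (fun u hu => ?_) hv
    obtain ⟨hu, hvu⟩ := (hN u).1 hu
    exact ⟨hvu, mem_of_mem_erase hu⟩
  have hcnt' : ∀ i, #(G.cliqueFinsetOn s (i + 1)) = chooseSum (#N ::ₘ L) i := fun i => by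
    rw [← insert_erase hvs, card_cliqueFinsetOn_insert (notMem_erase v s) hN, hcnt,
      card_cliqueFinsetOn_of_isClique hNc, chooseSum_cons, add_comm]
  refine ⟨#N ::ₘ L, fun d hd k hk => ?_, by
    simp [hcard, card_erase_of_mem hvs, Nat.sub_add_cancel hs.card_pos], hcnt'⟩
  rcases Multiset.mem_cons.1 hd with rfl | hd
  · rcases hk.eq_or_lt with rfl | hlt
    · exact Multiset.mem_cons_self _ _
    obtain ⟨j, hj⟩ : ∃ j, #N = j + 1 := ⟨#N - 1, by omega⟩
    have hpos : 0 < chooseSum L j := by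
      rw [← hcnt]
      exact card_pos.2 ⟨N, mem_cliqueFinsetOn.2 ⟨hNs, hNc, hj⟩⟩
    obtain ⟨m, hm, hjm⟩ := exists_le_of_chooseSum_pos hpos
    exact Multiset.mem_cons_of_mem (hL m hm k (by omega))
  · exact Multiset.mem_cons_of_mem (hL d hd k hk)

end SimpleGraph

/-! ### Threshold graphs -/

lemma IsThresholdOn.congr {T T' : SimpleGraph V} {s : Finset V} (h : IsThresholdOn T s)
    (hTT' : ∀ x ∈ s, ∀ y ∈ s, T.Adj x y ↔ T'.Adj x y) : IsThresholdOn T' s := by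
  induction h with
  | single v => exact .single v
  | isolated s v hv _ hiso ih =>
    refine .isolated s v hv (ih fun x hx y hy => hTT' x (mem_insert_of_mem hx) y
      (mem_insert_of_mem hy)) fun u hu => ?_
    rw [← hTT' v (mem_insert_self v s) u (mem_insert_of_mem hu)]
    exact hiso u hu
  | dominating s v hv _ hdom ih =>
    refine .dominating s v hv (ih fun x hx y hy => hTT' x (mem_insert_of_mem hx) y
      (mem_insert_of_mem hy)) fun u hu => ?_
    rw [← hTT' v (mem_insert_self v s) u (mem_insert_of_mem hu)]
    exact hdom u hu

/-- The new vertex `v` is isolated if `N = ∅` and dominating if `N = s`. -/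
lemma exists_isThresholdOn_insert {T' : SimpleGraph V} {s N : Finset V} {v : V} (hv : v ∉ s)
    (hT' : s.Nonempty → IsThresholdOn T' s) (hN : N = ∅ ∨ N = s) :
    ∃ T : SimpleGraph V, IsThresholdOn T (insert v s) ∧ ∀ i,
      #(T.cliqueFinsetOn (insert v s) (i + 1)) =
        #(T'.cliqueFinsetOn s (i + 1)) + #(T'.cliqueFinsetOn N i) := by
  have hNs : N ⊆ s := by rcases hN with rfl | rfl <;> simp
  set T := T'.deleteIncidenceSet v ⊔ fromRel (fun x y => x = v ∧ y ∈ N)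
  have hagree : ∀ x ∈ s, ∀ y ∈ s, T.Adj x y ↔ T'.Adj x y := by
    intro x hx y hy
    have hxv : x ≠ v := by rintro rfl; exact hv hx
    have hyv : y ≠ v := by rintro rfl; exact hv hy
    simp [T, deleteIncidenceSet_adj, hxv, hyv]
  have hadj : ∀ u ∈ s, T.Adj v u ↔ u ∈ N := by
    intro u hu
    have huv : u ≠ v := by rintro rfl; exact hv hu
    simp [T, deleteIncidenceSet_adj, huv, Ne.symm huv]
  refine ⟨T, ?_, fun i => ?_⟩
  · rcases s.eq_empty_or_nonempty with rfl | hs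
    · exact .single v
    have hTs := (hT' hs).congr fun x hx y hy => (hagree x hx y hy).symm
    rcases hN with hN | hN
    · exact .isolated s v hv hTs fun u hu h => by simpa [hN] using (hadj u hu).1 h
    · exact .dominating s v hv hTs fun u hu => (hadj u hu).2 (hN ▸ hu)
  · rw [card_cliqueFinsetOn_insert hv (N := N) fun u => ⟨fun h => ⟨hNs h, (hadj u (hNs h)).2 h⟩,
      fun h => (hadj u h.1).1 h.2⟩, cliqueFinsetOn_congr hagree,
      cliqueFinsetOn_congr fun x hx y hy => hagree x (hNs hx) y (hNs hy)]

theorem exists_isThresholdOn_card_cliqueFinsetOn (s : Finset V) (L : Multiset ℕ)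
    (hL : IsDownClosed L) (hcard : Multiset.card L = #s) :
    ∃ T : SimpleGraph V, (s.Nonempty → IsThresholdOn T s) ∧
      ∀ i, #(T.cliqueFinsetOn s (i + 1)) = chooseSum L i := by
  induction s using Finset.induction_on generalizing L with
  | empty =>
    obtain rfl : L = 0 := Multiset.card_eq_zero.1 hcard
    exact ⟨⊥, by simp, fun i => by simp [card_cliqueFinsetOn_empty_succ, chooseSum]⟩
  | insert v s hv ih =>
    have hne : L ≠ 0 := by
      rintro rfl
      rw [card_insert_of_notMem hv] at hcard
      simp at hcard
    obtain ⟨L', hL', hcases⟩ := hL.exists_eq_zero_cons hne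
    rcases hcases with rfl | rfl
    · obtain ⟨T', hT', hcnt⟩ := ih L' hL' (by simpa [hv] using hcard)
      obtain ⟨T, hT, hTcnt⟩ := exists_isThresholdOn_insert hv hT' (.inl rfl)
      refine ⟨T, fun _ => hT, fun i => ?_⟩
      rw [hTcnt, hcnt, chooseSum_cons, card_cliqueFinsetOn_of_isClique (by simp), card_empty,
        add_comm]
    · obtain ⟨T', hT', hcnt⟩ := ih L' hL' (by simpa [hv] using hcard)
      obtain ⟨T, hT, hTcnt⟩ := exists_isThresholdOn_insert (N := s) hv hT' (.inr rfl)
      refine ⟨T, fun _ => hT, fun i => ?_⟩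
      rw [hTcnt, hcnt, chooseSum_cons]
      rcases i with _ | i
      · simp [card_cliqueFinsetOn_zero, chooseSum_zero, add_comm]
      · rw [hcnt, chooseSum_map_succ]
        simp

lemma cliqueCount_eq_card_cliqueFinsetOn [Fintype V] (G : SimpleGraph V) (i : ℕ) :
    cliqueCount G i = #(G.cliqueFinsetOn univ i) := by
  rw [cliqueCount, ← Set.ncard_coe_finset]
  congr 1
  ext t
  simp

end

/-- Every non-complete chordal graph `G` admits a threshold graph `T` on the same vertex
set having the same number of cliques of each cardinality `i ≥ 1`; in particular `G` and
`T` have the same clique vector and the same `b`-vector. -/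
theorem stmt10 {V : Type} [Fintype V] [DecidableEq V] (G : SimpleGraph V)
    (hnc : G ≠ ⊤) (hch : IsChordal G) :
    ∃ T : SimpleGraph V, IsThreshold T ∧
      ∀ i : ℕ, 1 ≤ i → cliqueCount T i = cliqueCount G i := by
  have hV : (univ : Finset V).Nonempty := by
    by_contra hV
    exact hnc (SimpleGraph.ext (funext fun u => absurd ⟨u, mem_univ u⟩ hV))
  obtain ⟨L, hL, hcard, hG⟩ :=
    exists_card_cliqueFinsetOn_eq_chooseSum (fun s hs => hch.exists_isSimplicialIn hs) univ
  obtain ⟨T, hT, hTcnt⟩ := exists_isThresholdOn_card_cliqueFinsetOn univ L hL hcard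
  refine ⟨T, hT hV, fun i hi => ?_⟩
  obtain ⟨j, rfl⟩ := Nat.exists_eq_add_of_le' hi
  rw [cliqueCount_eq_card_cliqueFinsetOn, cliqueCount_eq_card_cliqueFinsetOn, hTcnt, hG]
end
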